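/- arXiv:1412.8114 — 7 statements merged into one kernel-verified Lean document; each statement's English description precedes it below -/
import Mathlib

section
/- Let G = ([n], E) be a finite simple graph and let P = {x ∈ ℝ^n : Σ_{i∈[n]} x_i = n + |E| and Σ_{i∈σ} x_i ≥ |σ| + |E(G[σ])| for every σ ⊆ [n]}. Then a point x ∈ ℝ^n is an extreme point (vertex) of P if and only if there exists an acyclic orientation O of G such that x_i = indeg_O(i) + 1 for every i ∈ [n]. -/
/-!
Write `f σ = |σ| + |E(G[σ])|`. A feasible point `x` is a vertex of the polytope exactly when
the only `d` summing to zero over every tight set (`∑_σ x = f σ`) is `d = 0`.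

If `x = indeg_O + 1` for an acyclic orientation `O`, every set closed under `O`-predecessors is
tight, and the ancestor sets of `v` with and without `v` pin down `d v`.

Conversely, `f` is supermodular, so the tight sets of a vertex form a lattice of sets that
separates points. The smallest tight set `hull v` containing `v` and `hull v \ {v}` are
tight. Orient an edge `uv` as `u → v` when `u ∈ hull v`: this is a well-defined orientation
because `f` is strictly supermodular across an edge, and it is acyclic because `hull` strictly
grows along arcs. Both `hull v` and `hull v \ {v}` are closed under predecessors, and
comparing the sums of `x` and `indeg + 1` over them gives `x v = indeg v + 1`.
-/

/-- The number of edges of the induced subgraph of `G` on `σ`. -/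
noncomputable def inducedEdgeCount {n : ℕ} (G : SimpleGraph (Fin n)) (σ : Set (Fin n)) : ℕ :=
  {e : Sym2 (Fin n) | e ∈ G.edgeSet ∧ ∀ v ∈ e, v ∈ σ}.ncard

/-- `O` is an orientation of `G`: it directs each edge of `G` in exactly one of the two
possible ways, and relates only adjacent vertices. -/
def IsOrientation {V : Type*} (G : SimpleGraph V) (O : V → V → Prop) : Prop :=
  (∀ u v, O u v → G.Adj u v) ∧ ∀ u v, G.Adj u v → (O u v ↔ ¬ O v u)

/-- The relation `O` has no directed cycles. -/
def IsAcyclicRel {V : Type*} (O : V → V → Prop) : Prop :=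
  ∀ v, ¬ Relation.TransGen O v v

/-- In-degree of a vertex with respect to an orientation. -/
noncomputable def inDeg {V : Type*} (O : V → V → Prop) (i : V) : ℕ :=
  {j : V | O j i}.ncard

open Finset

section Polyhedron

open Filter Topology

variable {E ι : Type*} [AddCommGroup E] [Module ℝ E]

def polyhedron (ℓ : ι → E →ₗ[ℝ] ℝ) (b : ι → ℝ) : Set E := {y | ∀ k, b k ≤ ℓ k y}

theorem mem_extremePoints_polyhedron_iff [Finite ι] {ℓ : ι → E →ₗ[ℝ] ℝ} {b : ι → ℝ} {x : E}
    (hx : x ∈ polyhedron ℓ b) :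
    x ∈ (polyhedron ℓ b).extremePoints ℝ ↔ ∀ d, (∀ k, ℓ k x = b k → ℓ k d = 0) → d = 0 := by
  constructor
  · intro hext d hd
    have hline : ∀ᶠ t in 𝓝 (0 : ℝ), x + t • d ∈ polyhedron ℓ b := by
      refine eventually_all.2 fun k => ?_
      simp only [map_add, map_smul, smul_eq_mul]
      by_cases hk : ℓ k x = b k
      · simp [hd k hk, hk]
      · have hlt : b k < ℓ k x + 0 * ℓ k d := by simpa using (hx k).lt_of_ne (Ne.symm hk)
        exact ((continuous_const.add (continuous_id.mul continuous_const)).tendsto 0).eventually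
          (lt_mem_nhds hlt) |>.mono fun _ => le_of_lt
    have hline' : ∀ᶠ t in 𝓝 (0 : ℝ), x + (-t) • d ∈ polyhedron ℓ b :=
      (continuous_neg.tendsto' 0 0 neg_zero).eventually hline
    obtain ⟨t, ht, hpos, hneg⟩ : ∃ t : ℝ, 0 < t ∧ _ ∧ _ :=
      ((eventually_mem_nhdsWithin (s := Set.Ioi 0)).and
        (nhdsWithin_le_nhds (hline.and hline'))).exists
    have hmid : x ∈ openSegment ℝ (x + t • d) (x + (-t) • d) :=
      ⟨1 / 2, 1 / 2, by norm_num, by norm_num, by norm_num, by module⟩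
    have htd : t • d = 0 := add_eq_left.mp (hext.2 hpos hneg hmid)
    exact (smul_eq_zero.mp htd).resolve_left ht.ne'
  · refine fun hrigid => ⟨hx, fun x₁ hx₁ x₂ hx₂ ⟨a, c, ha, hc, hac, hsum⟩ => ?_⟩
    refine sub_eq_zero.mp (hrigid _ fun k hk => ?_)
    have hcomb : ℓ k x = a * ℓ k x₁ + c * ℓ k x₂ := by simp [← hsum]
    have h₁ := hx₁ k
    have h₂ := hx₂ k
    have hb : b k = a * b k + c * b k := by rw [← add_mul, hac, one_mul]
    have : ℓ k x₁ ≤ b k := by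
      by_contra! hlt
      linarith [mul_lt_mul_of_pos_left hlt ha, mul_le_mul_of_nonneg_left h₂ hc.le]
    simp only [map_sub]
    linarith

end Polyhedron

section Orientation

variable {V : Type*} {O : V → V → Prop}

theorem isAcyclicRel_of_lt {α : Type*} [Preorder α] (φ : V → α) (h : ∀ u v, O u v → φ u < φ v) :
    IsAcyclicRel O := fun v hv =>
  lt_irrefl (φ v) (Relation.transGen_eq_self (r := (· < · : α → α → Prop)) ▸ hv.lift φ h :)

def IsPredClosed (O : V → V → Prop) (σ : Finset V) : Prop := ∀ ⦃u v⦄, O u v → v ∈ σ → u ∈ σ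

open Classical in
theorem card_filter_le_inDeg [Finite V] {σ : Finset V} {v : V} :
    #{u ∈ σ | O u v} ≤ inDeg O v := by
  rw [inDeg, ← Set.ncard_coe_finset]
  exact Set.ncard_le_ncard (by intro u; simp) (Set.toFinite _)

open Classical in
theorem inDeg_eq_card_filter {σ : Finset V} {v : V} (h : ∀ u, O u v → u ∈ σ) :
    inDeg O v = #{u ∈ σ | O u v} := by
  rw [inDeg, ← Set.ncard_coe_finset]
  congr 1
  ext u
  simpa using fun huv => h u huv

variable [Fintype V]

theorem eq_zero_of_sum_eq_zero_of_isPredClosed {M : Type*} [AddCommGroup M] (hO : IsAcyclicRel O)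
    {d : V → M} (hd : ∀ σ, IsPredClosed O σ → ∑ i ∈ σ, d i = 0) : d = 0 := by
  classical
  funext v
  let anc : Finset V := {u | Relation.ReflTransGen O u v}
  have hv : v ∈ anc := by simp [anc, Relation.ReflTransGen.refl]
  have hanc : IsPredClosed O anc := fun a b hab hb => by
    simp only [anc, mem_filter, mem_univ, true_and] at hb ⊢
    exact hb.head hab
  have herase : IsPredClosed O (anc.erase v) := fun a b hab hb => by
    simp only [anc, mem_erase, mem_filter, mem_univ, true_and] at hb ⊢
    refine ⟨?_, hb.2.head hab⟩
    rintro rfl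
    exact hO a (Relation.TransGen.head' hab hb.2)
  have := add_sum_erase anc d hv
  rw [hd _ hanc, hd _ herase, add_zero] at this
  exact this

end Orientation

section Hull

variable {V : Type*} [DecidableEq V] {𝒯 : Set (Finset V)} {u v : V} {s : Finset V}
  {O : V → V → Prop}

theorem eq_of_forall_mem_iff_of_rigid
    (hrigid : ∀ d : V → ℝ, (∀ s ∈ 𝒯, ∑ i ∈ s, d i = 0) → d = 0)
    (h : ∀ s ∈ 𝒯, u ∈ s ↔ v ∈ s) : u = v := by
  by_contra huv
  have hd := hrigid (Pi.single u 1 - Pi.single v 1) fun s hs => by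
    simp [sum_sub_distrib, sum_pi_single', h s hs]
  simpa [huv] using congr_fun hd u

variable [Fintype V]

open Classical in
noncomputable def hull (𝒯 : Set (Finset V)) (v : V) : Finset V := {u | ∀ s ∈ 𝒯, v ∈ s → u ∈ s}

theorem mem_hull : u ∈ hull 𝒯 v ↔ ∀ s ∈ 𝒯, v ∈ s → u ∈ s := by
  simp [hull]

theorem mem_hull_self : v ∈ hull 𝒯 v := mem_hull.2 fun _ _ => id

theorem hull_subset (hs : s ∈ 𝒯) (hv : v ∈ s) : hull 𝒯 v ⊆ s :=
  fun _ hu => mem_hull.1 hu s hs hv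

theorem hull_mem (hinf : InfClosed 𝒯) (huniv : univ ∈ 𝒯) : hull 𝒯 v ∈ 𝒯 := by
  classical
  let S : Finset (Finset V) := {s | s ∈ 𝒯 ∧ v ∈ s}
  have hne : S.Nonempty := ⟨univ, by simpa [S]⟩
  have : hull 𝒯 v = S.inf' hne id := by ext; simp [S, mem_hull]
  exact this ▸ hinf.finsetInf'_mem hne fun s hs => (mem_filter.1 hs).2.1

theorem hull_subset_hull (hinf : InfClosed 𝒯) (huniv : univ ∈ 𝒯) (h : u ∈ hull 𝒯 v) :
    hull 𝒯 u ⊆ hull 𝒯 v :=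
  hull_subset (hull_mem hinf huniv) h

theorem eq_of_mem_hull_of_mem_hull (hsep : ∀ u v, (∀ s ∈ 𝒯, u ∈ s ↔ v ∈ s) → u = v)
    (huv : u ∈ hull 𝒯 v) (hvu : v ∈ hull 𝒯 u) : u = v :=
  hsep u v fun s hs => ⟨fun hu => mem_hull.1 hvu s hs hu, fun hv => mem_hull.1 huv s hs hv⟩

theorem erase_hull_mem (hsup : SupClosed 𝒯) (hinf : InfClosed 𝒯) (hempty : ∅ ∈ 𝒯)
    (huniv : univ ∈ 𝒯) (hsep : ∀ u v, (∀ s ∈ 𝒯, u ∈ s ↔ v ∈ s) → u = v) :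
    (hull 𝒯 v).erase v ∈ 𝒯 := by
  obtain hnil | hne := ((hull 𝒯 v).erase v).eq_empty_or_nonempty
  · exact hnil ▸ hempty
  have : (hull 𝒯 v).erase v = ((hull 𝒯 v).erase v).sup (hull 𝒯) := by
    refine le_antisymm (fun u hu => mem_sup.2 ⟨u, hu, mem_hull_self⟩) (Finset.sup_le fun u hu => ?_)
    obtain ⟨hne, hu⟩ := mem_erase.1 hu
    refine subset_erase.2 ⟨hull_subset_hull hinf huniv hu, fun hv => hne ?_⟩
    exact eq_of_mem_hull_of_mem_hull hsep hu hv
  exact this ▸ hsup.finsetSup_mem hne fun u _ => hull_mem hinf huniv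

theorem hull_ssubset_hull (hinf : InfClosed 𝒯) (huniv : univ ∈ 𝒯)
    (hsep : ∀ u v, (∀ s ∈ 𝒯, u ∈ s ↔ v ∈ s) → u = v) (h : u ∈ hull 𝒯 v) (hne : u ≠ v) :
    hull 𝒯 u ⊂ hull 𝒯 v :=
  ssubset_of_subset_of_ne (hull_subset_hull hinf huniv h) fun heq =>
    hne (eq_of_mem_hull_of_mem_hull hsep h (heq ▸ mem_hull_self))

theorem isPredClosed_hull (hinf : InfClosed 𝒯) (huniv : univ ∈ 𝒯)
    (hO : ∀ u v, O u v → u ∈ hull 𝒯 v) : IsPredClosed O (hull 𝒯 v) :=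
  fun a b hab hb => hull_subset_hull hinf huniv hb (hO a b hab)

theorem isPredClosed_erase_hull (hinf : InfClosed 𝒯) (huniv : univ ∈ 𝒯)
    (hsep : ∀ u v, (∀ s ∈ 𝒯, u ∈ s ↔ v ∈ s) → u = v) (hO : ∀ u v, O u v → u ∈ hull 𝒯 v) :
    IsPredClosed O ((hull 𝒯 v).erase v) := fun a b hab hb => by
  obtain ⟨hbv, hb⟩ := mem_erase.1 hb
  have ha := hO a b hab
  refine mem_erase.2 ⟨?_, hull_subset_hull hinf huniv hb ha⟩
  rintro rfl
  exact hbv (eq_of_mem_hull_of_mem_hull hsep hb ha)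

end Hull

section TightSets

variable {V : Type*} [DecidableEq V] {f : Finset V → ℝ} {x : V → ℝ} {s t : Finset V}

theorem union_add_inter_le_of_tight (hx : ∀ s, f s ≤ ∑ i ∈ s, x i)
    (hs : ∑ i ∈ s, x i = f s) (ht : ∑ i ∈ t, x i = f t) :
    f (s ∪ t) + f (s ∩ t) ≤ f s + f t := by
  linarith [hx (s ∪ t), hx (s ∩ t), sum_union_inter (s₁ := s) (s₂ := t) (f := x)]

theorem tight_union_inter (hf : ∀ s t, f s + f t ≤ f (s ∪ t) + f (s ∩ t))
    (hx : ∀ s, f s ≤ ∑ i ∈ s, x i) (hs : ∑ i ∈ s, x i = f s) (ht : ∑ i ∈ t, x i = f t) :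
    ∑ i ∈ s ∪ t, x i = f (s ∪ t) ∧ ∑ i ∈ s ∩ t, x i = f (s ∩ t) := by
  have := union_add_inter_le_of_tight hx hs ht
  have := sum_union_inter (s₁ := s) (s₂ := t) (f := x)
  constructor <;> linarith [hf s t, hx (s ∪ t), hx (s ∩ t)]

end TightSets

namespace SimpleGraph

variable {V : Type*} (G : SimpleGraph V) [DecidableRel G.Adj] {σ τ : Finset V}
  {O : V → V → Prop} {x : V → ℝ}

def edgesIn (σ : Finset V) : Finset (Sym2 V) := {e ∈ σ.sym2 | e ∈ G.edgeSet}

variable {G} in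
theorem mem_edgesIn {e : Sym2 V} : e ∈ G.edgesIn σ ↔ e ∈ G.edgeSet ∧ ∀ v ∈ e, v ∈ σ := by
  rw [edgesIn, mem_filter, mem_sym2_iff, and_comm]

theorem edgesIn_mono (h : σ ⊆ τ) : G.edgesIn σ ⊆ G.edgesIn τ :=
  filter_subset_filter _ (sym2_mono h)

open Classical in
theorem card_edgesIn_eq_sum_card_filter (hO : IsOrientation G O) (σ : Finset V) :
    #(G.edgesIn σ) = ∑ v ∈ σ, #{u ∈ σ | O u v} := by
  have harcs : #{p ∈ σ ×ˢ σ | O p.1 p.2} = #(G.edgesIn σ) := by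
    refine card_nbij (fun p : V × V => s(p.1, p.2)) (fun p hp => ?_) (fun p hp q hq hpq => ?_)
      (fun e he => ?_)
    · simp only [coe_filter, mem_product, Set.mem_ofPred_eq] at hp
      exact mem_edgesIn.2 ⟨hO.1 _ _ hp.2, by simp [hp.1.1, hp.1.2]⟩
    · simp only [coe_filter, Set.mem_ofPred_eq] at hp hq
      obtain h | ⟨h₁, h₂⟩ := Sym2.eq_iff.1 hpq
      · exact Prod.ext h.1 h.2
      · rw [h₁, h₂] at hp
        exact absurd hp.2 ((hO.2 _ _ (hO.1 _ _ hq.2)).1 hq.2)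
    · induction e with
      | _ a b =>
        obtain ⟨hab : G.Adj a b, hmem⟩ := mem_edgesIn.1 he
        have ha := hmem a (Sym2.mem_mk_left a b)
        have hb := hmem b (Sym2.mem_mk_right a b)
        by_cases hO' : O a b
        · exact ⟨(a, b), by simp [ha, hb, hO'], rfl⟩
        · exact ⟨(b, a), by simp [ha, hb, (hO.2 b a hab.symm).2 hO'], Sym2.eq_swap⟩
  rw [← harcs, card_filter, sum_product_right]
  simp only [card_filter]

theorem card_edgesIn_le_sum_inDeg [Finite V] (hO : IsOrientation G O) (σ : Finset V) :
    #(G.edgesIn σ) ≤ ∑ v ∈ σ, inDeg O v := by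
  classical
  rw [G.card_edgesIn_eq_sum_card_filter hO]
  exact sum_le_sum fun v _ => card_filter_le_inDeg

theorem sum_inDeg_eq_card_edgesIn (hO : IsOrientation G O) (hσ : IsPredClosed O σ) :
    ∑ v ∈ σ, inDeg O v = #(G.edgesIn σ) := by
  classical
  rw [G.card_edgesIn_eq_sum_card_filter hO]
  exact sum_congr rfl fun v hv => inDeg_eq_card_filter fun u huv => hσ huv hv

def vertexEdgeCount (σ : Finset V) : ℕ := #σ + #(G.edgesIn σ)

def IsTight (x : V → ℝ) (σ : Finset V) : Prop := ∑ i ∈ σ, x i = G.vertexEdgeCount σ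

theorem isTight_empty : G.IsTight x ∅ := by
  simp [IsTight, vertexEdgeCount, edgesIn]

theorem isTight_inDeg_add_one (hO : IsOrientation G O) (hσ : IsPredClosed O σ) :
    G.IsTight (fun v => (inDeg O v : ℝ) + 1) σ := by
  simp only [IsTight, vertexEdgeCount, sum_add_distrib, ← G.sum_inDeg_eq_card_edgesIn hO hσ]
  push_cast
  simp [add_comm]

section Supermodularity

variable [DecidableEq V]

theorem edgesIn_inter : G.edgesIn (σ ∩ τ) = G.edgesIn σ ∩ G.edgesIn τ := by
  ext e
  simp only [mem_inter, mem_edgesIn]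
  grind

theorem vertexEdgeCount_add_vertexEdgeCount :
    G.vertexEdgeCount σ + G.vertexEdgeCount τ
      + #(G.edgesIn (σ ∪ τ) \ (G.edgesIn σ ∪ G.edgesIn τ))
      = G.vertexEdgeCount (σ ∪ τ) + G.vertexEdgeCount (σ ∩ τ) := by
  have hsub : G.edgesIn σ ∪ G.edgesIn τ ⊆ G.edgesIn (σ ∪ τ) :=
    union_subset (G.edgesIn_mono subset_union_left) (G.edgesIn_mono subset_union_right)
  have hV := card_union_add_card_inter σ τ
  have hE := card_union_add_card_inter (G.edgesIn σ) (G.edgesIn τ)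
  have hD := card_sdiff_add_card_eq_card hsub
  rw [vertexEdgeCount, vertexEdgeCount, vertexEdgeCount, vertexEdgeCount, edgesIn_inter]
  omega

theorem vertexEdgeCount_supermodular :
    G.vertexEdgeCount σ + G.vertexEdgeCount τ
      ≤ G.vertexEdgeCount (σ ∪ τ) + G.vertexEdgeCount (σ ∩ τ) :=
  G.vertexEdgeCount_add_vertexEdgeCount ▸ Nat.le_add_right _ _

theorem vertexEdgeCount_add_lt {a b : V} (hab : G.Adj a b) (ha : a ∈ σ) (ha' : a ∉ τ)
    (hb : b ∈ τ) (hb' : b ∉ σ) :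
    G.vertexEdgeCount σ + G.vertexEdgeCount τ
      < G.vertexEdgeCount (σ ∪ τ) + G.vertexEdgeCount (σ ∩ τ) := by
  rw [← G.vertexEdgeCount_add_vertexEdgeCount, Nat.lt_add_right_iff_pos, card_pos]
  refine ⟨s(a, b), mem_sdiff.2 ⟨mem_edgesIn.2 ⟨hab, ?_⟩, ?_⟩⟩
  · simp [ha, hb]
  · simp [mem_edgesIn, ha', hb']

end Supermodularity

variable [Fintype V]

def indegreePolytope : Set (V → ℝ) :=
  {y | ∑ i, y i = G.vertexEdgeCount univ ∧ ∀ σ, (G.vertexEdgeCount σ : ℝ) ≤ ∑ i ∈ σ, y i}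

theorem inDeg_add_one_mem_indegreePolytope (hO : IsOrientation G O) :
    (fun v => (inDeg O v : ℝ) + 1) ∈ G.indegreePolytope := by
  refine ⟨G.isTight_inDeg_add_one hO fun _ _ _ _ => mem_univ _, fun σ => ?_⟩
  have := G.card_edgesIn_le_sum_inDeg hO σ
  simp only [vertexEdgeCount, sum_add_distrib]
  push_cast
  simp only [sum_const, nsmul_eq_mul, mul_one]
  linarith [(Nat.cast_le (α := ℝ)).2 this, Nat.cast_sum (R := ℝ) σ (inDeg O)]

theorem card_edgesIn_univ : #(G.edgesIn univ) = G.edgeSet.ncard := by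
  rw [← Set.ncard_coe_finset]
  congr 1
  ext e
  simp [mem_edgesIn]

/-- The constraint `none` is the reverse of the `univ` inequality, which turns the equation
`∑ i, y i = G.vertexEdgeCount univ` into a pair of inequalities. -/
theorem indegreePolytope_eq_polyhedron :
    G.indegreePolytope = polyhedron
      (fun k : Option (Finset V) => k.elim (-∑ i, LinearMap.proj i) (∑ i ∈ ·, LinearMap.proj i))
      (fun k => k.elim (-(G.vertexEdgeCount univ : ℝ)) (G.vertexEdgeCount ·)) := by
  ext y
  simp only [indegreePolytope, Set.mem_ofPred_eq, polyhedron, Option.forall, Option.elim_none,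
    Option.elim_some, LinearMap.neg_apply, LinearMap.coe_sum, LinearMap.coe_proj, Finset.sum_apply,
    Function.eval, neg_le_neg_iff, and_congr_left_iff]
  exact fun h => ⟨le_of_eq, fun h' => h'.antisymm (by simpa using h univ)⟩

theorem mem_extremePoints_indegreePolytope_iff_of_mem (hx : x ∈ G.indegreePolytope) :
    x ∈ G.indegreePolytope.extremePoints ℝ ↔
      ∀ d : V → ℝ, (∀ σ, G.IsTight x σ → ∑ i ∈ σ, d i = 0) → d = 0 := by
  have hx' := G.indegreePolytope_eq_polyhedron ▸ hx
  rw [G.indegreePolytope_eq_polyhedron, mem_extremePoints_polyhedron_iff hx']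
  refine forall_congr' fun d => imp_congr_left ?_
  simp only [Option.forall, Option.elim_none, Option.elim_some, LinearMap.neg_apply,
    LinearMap.coe_sum, LinearMap.coe_proj, Finset.sum_apply, Function.eval, neg_inj, neg_eq_zero,
    IsTight, and_iff_right_iff_imp]
  exact fun h hu => h univ hu

variable [DecidableEq V]

theorem supClosed_isTight (hx : x ∈ G.indegreePolytope) : SupClosed {σ | G.IsTight x σ} :=
  fun _ hσ _ hτ => (tight_union_inter (f := fun σ => (G.vertexEdgeCount σ : ℝ))
    (fun _ _ => mod_cast G.vertexEdgeCount_supermodular) hx.2 hσ hτ).1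

theorem infClosed_isTight (hx : x ∈ G.indegreePolytope) : InfClosed {σ | G.IsTight x σ} :=
  fun _ hσ _ hτ => (tight_union_inter (f := fun σ => (G.vertexEdgeCount σ : ℝ))
    (fun _ _ => mod_cast G.vertexEdgeCount_supermodular) hx.2 hσ hτ).2

theorem mem_or_mem_of_isTight (hx : x ∈ G.indegreePolytope) (hσ : G.IsTight x σ)
    (hτ : G.IsTight x τ) {a b : V} (hab : G.Adj a b) (ha : a ∈ σ) (hb : b ∈ τ) :
    a ∈ τ ∨ b ∈ σ := by
  by_contra! h
  have hle := union_add_inter_le_of_tight (f := fun σ => (G.vertexEdgeCount σ : ℝ)) hx.2 hσ hτ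
  have hlt : (G.vertexEdgeCount σ + G.vertexEdgeCount τ : ℝ)
      < G.vertexEdgeCount (σ ∪ τ) + G.vertexEdgeCount (σ ∩ τ) :=
    mod_cast G.vertexEdgeCount_add_lt hab ha h.1 hb h.2
  exact hle.not_gt hlt

theorem exists_isOrientation_of_rigid (hx : x ∈ G.indegreePolytope)
    (hrigid : ∀ d : V → ℝ, (∀ σ, G.IsTight x σ → ∑ i ∈ σ, d i = 0) → d = 0) :
    ∃ O, IsOrientation G O ∧ IsAcyclicRel O ∧ ∀ i, x i = (inDeg O i : ℝ) + 1 := by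
  set 𝒯 := {σ | G.IsTight x σ}
  have hsep : ∀ u v, (∀ s ∈ 𝒯, u ∈ s ↔ v ∈ s) → u = v :=
    fun _ _ => eq_of_forall_mem_iff_of_rigid hrigid
  have hinf := G.infClosed_isTight hx
  have huniv : univ ∈ 𝒯 := hx.1
  have hhull : ∀ {v}, hull 𝒯 v ∈ 𝒯 := hull_mem hinf huniv
  let O u v := G.Adj u v ∧ u ∈ hull 𝒯 v
  have hO : IsOrientation G O := by
    refine ⟨fun _ _ h => h.1, fun u v huv => ⟨fun h h' => ?_, fun h => ⟨huv, ?_⟩⟩⟩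
    · exact huv.ne (eq_of_mem_hull_of_mem_hull hsep h.2 h'.2)
    · refine (G.mem_or_mem_of_isTight hx hhull hhull huv mem_hull_self
        mem_hull_self).resolve_right fun hv => h ⟨huv.symm, hv⟩
  refine ⟨O, hO, isAcyclicRel_of_lt (hull 𝒯) fun u v h => ?_, fun v => ?_⟩
  · exact hull_ssubset_hull hinf huniv hsep h.2 h.1.ne
  have hsum : ∀ σ ∈ 𝒯, IsPredClosed O σ →
      ∑ i ∈ σ, x i = ∑ i ∈ σ, ((inDeg O i : ℝ) + 1) :=
    fun σ hσ hcl => hσ.trans (G.isTight_inDeg_add_one hO hcl).symm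
  have h₁ := hsum (hull 𝒯 v) hhull (isPredClosed_hull hinf huniv fun _ _ h => h.2)
  have h₂ := hsum ((hull 𝒯 v).erase v)
    (erase_hull_mem (G.supClosed_isTight hx) hinf G.isTight_empty huniv hsep)
    (isPredClosed_erase_hull hinf huniv hsep fun _ _ h => h.2)
  rw [← add_sum_erase _ _ mem_hull_self, ← add_sum_erase _ _ mem_hull_self, h₂] at h₁
  exact add_right_cancel h₁

theorem mem_extremePoints_indegreePolytope_iff :
    x ∈ G.indegreePolytope.extremePoints ℝ ↔
      ∃ O, IsOrientation G O ∧ IsAcyclicRel O ∧ ∀ i, x i = (inDeg O i : ℝ) + 1 := by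
  constructor
  · intro hx
    exact G.exists_isOrientation_of_rigid hx.1
      ((G.mem_extremePoints_indegreePolytope_iff_of_mem hx.1).1 hx)
  · rintro ⟨O, hO, hacyc, hxO⟩
    obtain rfl : x = fun i => (inDeg O i : ℝ) + 1 := funext hxO
    refine (G.mem_extremePoints_indegreePolytope_iff_of_mem
      (G.inDeg_add_one_mem_indegreePolytope hO)).2 fun d hd => ?_
    exact eq_zero_of_sum_eq_zero_of_isPredClosed hacyc fun σ hσ =>
      hd σ (G.isTight_inDeg_add_one hO hσ)

end SimpleGraph

theorem inducedEdgeCount_eq_card_edgesIn {n : ℕ} (G : SimpleGraph (Fin n)) [DecidableRel G.Adj]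
    (σ : Finset (Fin n)) : inducedEdgeCount G σ = #(G.edgesIn σ) := by
  rw [inducedEdgeCount, ← Set.ncard_coe_finset]
  congr 1
  ext e
  simp [SimpleGraph.mem_edgesIn]

/-- the vertices of the polytope
`{x : Σ x_i = n + |E|, Σ_{i∈σ} x_i ≥ |σ| + |E(G[σ])| for all σ}` are exactly the points
`(indeg_O(i) + 1)_i` for acyclic orientations `O` of `G`. -/
theorem stmt1 (n : ℕ) (G : SimpleGraph (Fin n)) (x : Fin n → ℝ) :
    x ∈ Set.extremePoints ℝ {y : Fin n → ℝ |
        (∑ i, y i) = ((n + G.edgeSet.ncard : ℕ) : ℝ) ∧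
        ∀ σ : Finset (Fin n),
          ((σ.card + inducedEdgeCount G ↑σ : ℕ) : ℝ) ≤ ∑ i ∈ σ, y i} ↔
      ∃ O : Fin n → Fin n → Prop, IsOrientation G O ∧ IsAcyclicRel O ∧
        ∀ i, x i = (inDeg O i : ℝ) + 1 := by
  classical
  convert G.mem_extremePoints_indegreePolytope_iff (x := x) using 3
  ext y
  simp only [SimpleGraph.indegreePolytope, SimpleGraph.vertexEdgeCount,
    inducedEdgeCount_eq_card_edgesIn, G.card_edgesIn_univ, card_univ, Fintype.card_fin]
end

section
/- Let G = ([n], E) be a finite simple graph. Then the polytope P = {x ∈ ℝ^n : Σ_{i∈[n]} x_i = n + |E| and Σ_{i∈σ} x_i ≥ |σ| + |E(G[σ])| for every σ ⊆ [n]} satisfies P = (1/2)·Zon(G) + (1/2)·d_G + 1, where Zon(G) is the graphical zonotope of G (the Minkowski sum over all edges {i,j} ∈ E of the segments [e_i − e_j, e_j − e_i]), d_G ∈ ℝ^n is the degree vector of G (its i-th coordinate is the degree of vertex i), 1 is the all-ones vector, and the sum is Minkowski addition of the scaled set Zon(G) and the translation vector (1/2)·d_G + 1. -/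
open Pointwise

/-- The segment `[e_i - e_j, e_j - e_i]` associated to an (unordered) edge. -/
noncomputable def zonotopeSegment {n : ℕ} (e : Sym2 (Fin n)) : Set (Fin n → ℝ) :=
  Sym2.lift ⟨fun i j => segment ℝ (Pi.single i 1 - Pi.single j 1) (Pi.single j 1 - Pi.single i 1),
    fun i j => segment_symm ℝ _ _⟩ e

/-- The graphical zonotope of `G`: the Minkowski sum, over all edges `{i,j}` of `G`,
of the segments `[e_i - e_j, e_j - e_i]`. -/
noncomputable def graphicalZonotope {n : ℕ} (G : SimpleGraph (Fin n)) [DecidableRel G.Adj] :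
    Set (Fin n → ℝ) :=
  ∑ e ∈ G.edgeFinset, zonotopeSegment e

/-! ### Auxiliary definitions -/

/-- The `a`-th standard basis vector. -/
noncomputable def uv {n : ℕ} (a : Fin n) : Fin n → ℝ := Pi.single a 1

/-- Number of edges of a finite set of edges entirely inside `σ`. -/
noncomputable def edgeInCount {n : ℕ} (F : Finset (Sym2 (Fin n))) (σ : Finset (Fin n)) : ℕ :=
  by classical exact (F.filter (fun e => ∀ v ∈ e, v ∈ σ)).card

/-- The segment `[e_i, e_j]` of an edge. -/
noncomputable def edgeSeg {n : ℕ} (e : Sym2 (Fin n)) : Set (Fin n → ℝ) :=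
  Sym2.lift ⟨fun i j => segment ℝ (uv i) (uv j),
    fun _ _ => segment_symm ℝ _ _⟩ e

/-- The midpoint `(e_i + e_j)/2` of an edge. -/
noncomputable def mid {n : ℕ} (e : Sym2 (Fin n)) : Fin n → ℝ :=
  Sym2.lift ⟨fun i j => (1/2 : ℝ) • (uv i + uv j),
    fun i j => by dsimp only; rw [add_comm]⟩ e

lemma zonotopeSegment_mk {n : ℕ} (a b : Fin n) :
    zonotopeSegment s(a,b) = segment ℝ (uv a - uv b) (uv b - uv a) := rfl

lemma edgeSeg_mk {n : ℕ} (a b : Fin n) :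
    edgeSeg s(a,b) = segment ℝ (uv a) (uv b) := rfl

lemma mid_mk {n : ℕ} (a b : Fin n) : mid s(a,b) = (1/2 : ℝ) • (uv a + uv b) := rfl

lemma sum_uv {n : ℕ} (c : Fin n) (σ : Finset (Fin n)) :
    ∑ i ∈ σ, uv c i = if c ∈ σ then 1 else 0 :=
  Finset.sum_pi_single' c 1 σ

lemma forall_mem_sym2 {n : ℕ} (a b : Fin n) (σ : Finset (Fin n)) :
    (∀ v ∈ s(a,b), v ∈ σ) ↔ a ∈ σ ∧ b ∈ σ := by
  simp [Sym2.mem_iff, or_imp, forall_and]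

lemma edgeInCount_insert {n : ℕ} {F : Finset (Sym2 (Fin n))} {a b : Fin n}
    (h : s(a,b) ∉ F) (σ : Finset (Fin n)) :
    edgeInCount (insert s(a,b) F) σ
      = edgeInCount F σ + if a ∈ σ ∧ b ∈ σ then 1 else 0 := by
  classical
  simp only [edgeInCount, Finset.filter_insert]
  split_ifs with h1 h2 h2
  · rw [Finset.card_insert_of_notMem (fun hc => h (Finset.mem_filter.1 hc).1), Nat.add_comm]
  · exact absurd ((forall_mem_sym2 a b σ).1 h1) h2
  · exact absurd ((forall_mem_sym2 a b σ).2 h2) h1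
  · rfl

lemma edgeInCount_mono {n : ℕ} {F F' : Finset (Sym2 (Fin n))} (h : F ⊆ F')
    (σ : Finset (Fin n)) : edgeInCount F σ ≤ edgeInCount F' σ := by
  classical
  exact Finset.card_le_card (Finset.filter_subset_filter _ h)

lemma ite_helper (P1 P2 PU PI : Prop) [Decidable P1] [Decidable P2] [Decidable PU] [Decidable PI]
    (h1 : P1 → PU) (h2 : P2 → PU) (h3 : P1 → P2 → PI) :
    (if P1 then 1 else 0) + (if P2 then 1 else 0)
      ≤ (if PU then (1:ℕ) else 0) + (if PI then 1 else 0) := by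
  split_ifs <;> simp_all

lemma edgeInCount_supermodular {n : ℕ} (F : Finset (Sym2 (Fin n))) (σ₁ σ₂ : Finset (Fin n)) :
    edgeInCount F σ₁ + edgeInCount F σ₂
      ≤ edgeInCount F (σ₁ ∪ σ₂) + edgeInCount F (σ₁ ∩ σ₂) := by
  classical
  simp only [edgeInCount, Finset.card_filter]
  rw [← Finset.sum_add_distrib, ← Finset.sum_add_distrib]
  refine Finset.sum_le_sum fun e _ => ?_
  exact ite_helper _ _ _ _
    (fun h v hv => Finset.mem_union_left σ₂ (h v hv))
    (fun h v hv => Finset.mem_union_right σ₁ (h v hv))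
    (fun h1 h2 v hv => Finset.mem_inter.2 ⟨h1 v hv, h2 v hv⟩)

/-- The key structural result: the polytope determined by a finite set of (non-diagonal)
edges is the Minkowski sum of the segments `[e_i, e_j]` over the edges. -/
theorem Qset_eq {n : ℕ} (F : Finset (Sym2 (Fin n))) (hF : ∀ e ∈ F, ¬ e.IsDiag) :
    {z : Fin n → ℝ | (∑ i, z i) = (F.card : ℝ) ∧
      ∀ σ : Finset (Fin n), (edgeInCount F σ : ℝ) ≤ ∑ i ∈ σ, z i} = ∑ e ∈ F, edgeSeg e := by
  classical
  induction F using Finset.induction_on with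
  | empty =>
    ext z
    simp only [Set.mem_setOf_eq, Finset.sum_empty, Finset.card_empty, Nat.cast_zero]
    constructor
    · rintro ⟨h0, hσ⟩
      have hz : ∀ i, 0 ≤ z i := by
        intro i
        have := hσ {i}
        simpa [edgeInCount] using this
      have : ∀ i ∈ Finset.univ, z i = 0 :=
        (Finset.sum_eq_zero_iff_of_nonneg (fun i _ => hz i)).1 h0
      have : z = 0 := funext fun i => this i (Finset.mem_univ i)
      simp [this]
    · intro hz
      rw [Set.mem_zero] at hz
      subst hz
      refine ⟨by simp, fun σ => by simp [edgeInCount]⟩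
  | @insert e F heF ih =>
    revert heF hF
    induction e using Sym2.ind with
    | _ a b =>
      intro heF hF
      have hab : a ≠ b := by
        have := hF s(a,b) (Finset.mem_insert_self _ _)
        simpa [Sym2.mk_isDiag_iff] using this
      have hF' : ∀ e ∈ F, ¬ e.IsDiag := fun e he => hF e (Finset.mem_insert_of_mem he)
      rw [Finset.sum_insert heF, ← ih hF']
      have hcard : ((insert s(a,b) F).card : ℝ) = F.card + 1 := by
        rw [Finset.card_insert_of_notMem heF]; push_cast; ring
      ext z
      simp only [Set.mem_setOf_eq]
      constructor
      · rintro ⟨hsum, hineq⟩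
        -- slack function
        obtain ⟨s, hs_def⟩ : ∃ s : Finset (Fin n) → ℝ,
            s = fun σ => (∑ i ∈ σ, z i) - edgeInCount F σ := ⟨_, rfl⟩
        have hs_nonneg : ∀ σ, 0 ≤ s σ := by
          intro σ
          have h1 : (edgeInCount F σ : ℝ) ≤ edgeInCount (insert s(a,b) F) σ := by
            exact_mod_cast edgeInCount_mono (Finset.subset_insert _ _) σ
          have := hineq σ
          simp only [hs_def]
          linarith
        obtain ⟨T, hT_def⟩ : ∃ T : Finset (Finset (Fin n)),
            T = Finset.univ.filter (fun σ => a ∈ σ ∧ b ∉ σ) := ⟨_, rfl⟩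
        have hTne : T.Nonempty := by
          refine ⟨{a}, ?_⟩
          simp [hT_def, hab.symm]
        obtain ⟨t, ht_def⟩ : ∃ t : ℝ, t = min 1 (T.inf' hTne s) := ⟨_, rfl⟩
        have ht1 : t ≤ 1 := ht_def ▸ min_le_left _ _
        have ht_le : ∀ σ, a ∈ σ → b ∉ σ → t ≤ s σ := by
          intro σ ha hb
          rw [ht_def]
          exact le_trans (min_le_right _ _)
            (Finset.inf'_le s (by simp [hT_def, ha, hb]))
        have ht0 : 0 ≤ t := by
          rw [ht_def]
          refine le_min zero_le_one ?_
          exact Finset.le_inf' hTne s fun σ _ => hs_nonneg σ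
        have hcross : ∀ σ₂, b ∈ σ₂ → a ∉ σ₂ → 1 - s σ₂ ≤ t := by
          intro σ₂ hb2 ha2
          rw [ht_def]
          refine le_min (by linarith [hs_nonneg σ₂]) ?_
          refine Finset.le_inf' hTne s fun σ₁ hσ₁ => ?_
          rw [hT_def, Finset.mem_filter] at hσ₁
          obtain ⟨-, ha1, hb1⟩ := hσ₁
          -- supermodularity argument
          have hU : (edgeInCount F (σ₁ ∪ σ₂) : ℝ) + 1 ≤ ∑ i ∈ σ₁ ∪ σ₂, z i := by
            have := hineq (σ₁ ∪ σ₂)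
            rw [edgeInCount_insert heF] at this
            rw [if_pos ⟨Finset.mem_union_left _ ha1, Finset.mem_union_right _ hb2⟩] at this
            push_cast at this
            linarith
          have hI : (edgeInCount F (σ₁ ∩ σ₂) : ℝ) ≤ ∑ i ∈ σ₁ ∩ σ₂, z i := by
            have h1 : (edgeInCount F (σ₁ ∩ σ₂) : ℝ)
                ≤ edgeInCount (insert s(a,b) F) (σ₁ ∩ σ₂) := by
              exact_mod_cast edgeInCount_mono (Finset.subset_insert _ _) _
            linarith [hineq (σ₁ ∩ σ₂)]
          have hsuper : (edgeInCount F σ₁ : ℝ) + edgeInCount F σ₂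
              ≤ edgeInCount F (σ₁ ∪ σ₂) + edgeInCount F (σ₁ ∩ σ₂) := by
            exact_mod_cast edgeInCount_supermodular F σ₁ σ₂
          have hsums : ∑ i ∈ σ₁ ∪ σ₂, z i + ∑ i ∈ σ₁ ∩ σ₂, z i
              = ∑ i ∈ σ₁, z i + ∑ i ∈ σ₂, z i := Finset.sum_union_inter
          simp only [hs_def]
          linarith
        -- the decomposition
        refine ⟨t • uv a + (1-t) • uv b,
          ⟨t, 1-t, ht0, by linarith, by ring, rfl⟩,
          z - (t • uv a + (1-t) • uv b), ⟨?_, ?_⟩, by module⟩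
        · have : ∑ i, (t • uv a + (1-t) • uv b) i
              = t * (if a ∈ Finset.univ then 1 else 0)
                + (1-t) * (if b ∈ Finset.univ then 1 else 0) := by
            simp only [Pi.add_apply, Pi.smul_apply, smul_eq_mul, Finset.sum_add_distrib,
              ← Finset.mul_sum, sum_uv]
          simp only [Pi.sub_apply, Finset.sum_sub_distrib, this, Finset.mem_univ, if_true]
          rw [hsum, hcard]
          ring
        · intro σ
          have hps : ∑ i ∈ σ, (t • uv a + (1-t) • uv b) i
              = t * (if a ∈ σ then 1 else 0) + (1-t) * (if b ∈ σ then 1 else 0) := by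
            simp only [Pi.add_apply, Pi.smul_apply, smul_eq_mul, Finset.sum_add_distrib,
              ← Finset.mul_sum, sum_uv]
          have hmm := hineq σ
          rw [edgeInCount_insert heF] at hmm
          simp only [Pi.sub_apply, Finset.sum_sub_distrib, hps]
          by_cases ha : a ∈ σ <;> by_cases hb : b ∈ σ
          · rw [if_pos ⟨ha, hb⟩] at hmm; push_cast at hmm ⊢
            simp only [ha, hb, if_true]
            linarith
          · rw [if_neg (by tauto)] at hmm; push_cast at hmm ⊢
            have := ht_le σ ha hb
            simp only [hs_def] at this
            simp only [ha, hb, if_true, if_false]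
            linarith
          · rw [if_neg (by tauto)] at hmm; push_cast at hmm ⊢
            have := hcross σ hb ha
            simp only [hs_def] at this
            simp only [ha, hb, if_true, if_false]
            linarith
          · rw [if_neg (by tauto)] at hmm; push_cast at hmm ⊢
            simp only [ha, hb, if_false]
            linarith
      · rintro ⟨p, ⟨α, β, hα, hβ, hαβ, rfl⟩, w, ⟨hwsum, hwineq⟩, rfl⟩
        have hps : ∀ σ : Finset (Fin n), ∑ i ∈ σ, (α • uv a + β • uv b) i
            = α * (if a ∈ σ then 1 else 0) + β * (if b ∈ σ then 1 else 0) := by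
          intro σ
          simp only [Pi.add_apply, Pi.smul_apply, smul_eq_mul, Finset.sum_add_distrib,
            ← Finset.mul_sum, sum_uv]
        constructor
        · simp only [Pi.add_apply, Finset.sum_add_distrib, Pi.smul_apply, smul_eq_mul,
            ← Finset.mul_sum, sum_uv, Finset.mem_univ, if_true, hwsum, hcard]
          linarith
        · intro σ
          have hmm := hwineq σ
          have : ∑ i ∈ σ, ((α • uv a + β • uv b) + w) i
              = (α * (if a ∈ σ then 1 else 0) + β * (if b ∈ σ then 1 else 0))
                + ∑ i ∈ σ, w i := by
            simp only [Pi.add_apply, Finset.sum_add_distrib, ← hps σ]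
          rw [this, edgeInCount_insert heF]
          by_cases ha : a ∈ σ <;> by_cases hb : b ∈ σ
          · rw [if_pos ⟨ha, hb⟩]; push_cast
            simp only [ha, hb, if_true]
            linarith
          · rw [if_neg (by tauto)]; push_cast
            simp only [ha, hb, if_true, if_false]
            nlinarith
          · rw [if_neg (by tauto)]; push_cast
            simp only [ha, hb, if_true, if_false]
            nlinarith
          · rw [if_neg (by tauto)]; push_cast
            simp only [ha, hb, if_false]
            linarith

/-! ### Translation algebra -/

lemma half_zon {V : Type*} [AddCommGroup V] [Module ℝ V] (x y : V) :
    (1/2 : ℝ) • segment ℝ (x - y) (y - x) + ({(1/2 : ℝ) • (x + y)} : Set V) = segment ℝ x y := by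
  ext z
  simp only [Set.mem_add, Set.mem_smul_set, Set.mem_singleton_iff]
  constructor
  · rintro ⟨u, ⟨w, ⟨α, β, hα, hβ, hαβ, rfl⟩, rfl⟩, v, rfl, rfl⟩
    refine ⟨α, β, hα, hβ, hαβ, ?_⟩
    have hβ' : β = 1 - α := by linarith
    subst hβ'
    module
  · rintro ⟨α, β, hα, hβ, hαβ, rfl⟩
    refine ⟨(1/2:ℝ) • (α • (x - y) + β • (y - x)), ⟨_, ⟨α, β, hα, hβ, hαβ, rfl⟩, rfl⟩,
      (1/2:ℝ) • (x + y), rfl, ?_⟩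
    have hβ' : β = 1 - α := by linarith
    subst hβ'
    module

lemma edgeSeg_eq {n : ℕ} (e : Sym2 (Fin n)) :
    edgeSeg e = (1/2 : ℝ) • zonotopeSegment e + {mid e} := by
  induction e using Sym2.ind with
  | _ a b => exact (half_zon (uv a) (uv b)).symm

lemma set_smul_add {V : Type*} [AddCommGroup V] [Module ℝ V] (r : ℝ) (A B : Set V) :
    r • (A + B) = r • A + r • B := by
  ext x
  simp only [Set.mem_smul_set, Set.mem_add]
  constructor
  · rintro ⟨u, ⟨p, hp, q, hq, rfl⟩, rfl⟩
    exact ⟨r • p, ⟨p, hp, rfl⟩, r • q, ⟨q, hq, rfl⟩, (smul_add r p q).symm⟩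
  · rintro ⟨-, ⟨p, hp, rfl⟩, -, ⟨q, hq, rfl⟩, rfl⟩
    exact ⟨p + q, ⟨p, hp, q, hq, rfl⟩, smul_add r p q⟩

lemma set_smul_sum {V : Type*} [AddCommGroup V] [Module ℝ V] {ι : Type*} [DecidableEq ι]
    (r : ℝ) (F : Finset ι) (A : ι → Set V) :
    r • ∑ e ∈ F, A e = ∑ e ∈ F, r • A e := by
  induction F using Finset.induction_on with
  | empty =>
    simp only [Finset.sum_empty]
    ext x
    simp [Set.mem_smul_set]
  | @insert e F heF ih =>
    rw [Finset.sum_insert heF, Finset.sum_insert heF, set_smul_add, ih]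

lemma sum_singletons {V : Type*} [AddCommGroup V] {ι : Type*} [DecidableEq ι]
    (F : Finset ι) (f : ι → V) :
    ∑ e ∈ F, ({f e} : Set V) = {∑ e ∈ F, f e} := by
  induction F using Finset.induction_on with
  | empty => simp only [Finset.sum_empty]; rfl
  | @insert e F heF ih =>
    rw [Finset.sum_insert heF, Finset.sum_insert heF, ih, Set.singleton_add_singleton]

lemma mid_sum {n : ℕ} (G : SimpleGraph (Fin n)) [DecidableRel G.Adj] (v : Fin n) :
    ∑ e ∈ G.edgeFinset, mid e v = (1/2 : ℝ) * G.degree v := by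
  classical
  have h : ∀ e ∈ G.edgeFinset, mid e v = if v ∈ e then (1/2 : ℝ) else 0 := by
    intro e he
    have hd : ¬ e.IsDiag := G.not_isDiag_of_mem_edgeSet (SimpleGraph.mem_edgeFinset.1 he)
    revert hd
    induction e using Sym2.ind with
    | _ a b =>
      intro hd
      have hab : a ≠ b := by simpa [Sym2.mk_isDiag_iff] using hd
      rw [mid_mk]
      simp only [Pi.smul_apply, Pi.add_apply, smul_eq_mul, uv, Pi.single_apply,
        Sym2.mem_iff]
      by_cases h1 : v = a <;> by_cases h2 : v = b
      · exact absurd (h1 ▸ h2) hab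
      · simp [h1, h2, hab]
      · simp [h1, h2, hab.symm]
      · simp [h1, h2]
  rw [Finset.sum_congr rfl h, ← Finset.sum_filter, Finset.sum_const,
    ← SimpleGraph.incidenceFinset_eq_filter, SimpleGraph.card_incidenceFinset_eq_degree,
    nsmul_eq_mul, mul_comm]

lemma rhs_eq {n : ℕ} (G : SimpleGraph (Fin n)) [DecidableRel G.Adj] :
    (1/2 : ℝ) • graphicalZonotope G +
        ({fun i => (1/2 : ℝ) * (G.degree i : ℝ) + 1} : Set (Fin n → ℝ))
      = (∑ e ∈ G.edgeFinset, edgeSeg e) + ({fun _ => (1:ℝ)} : Set (Fin n → ℝ)) := by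
  classical
  have hc : (fun i => (1/2 : ℝ) * (G.degree i : ℝ) + 1)
      = (∑ e ∈ G.edgeFinset, mid e) + (fun _ => (1:ℝ)) := by
    funext v
    simp only [Pi.add_apply, Finset.sum_apply]
    rw [mid_sum]
  rw [graphicalZonotope, set_smul_sum, hc, ← Set.singleton_add_singleton,
    ← sum_singletons G.edgeFinset mid, ← add_assoc, ← Finset.sum_add_distrib]
  congr 1
  exact Finset.sum_congr rfl fun e _ => (edgeSeg_eq e).symm

lemma inducedEdgeCount_eq {n : ℕ} (G : SimpleGraph (Fin n)) [DecidableRel G.Adj]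
    (σ : Finset (Fin n)) : inducedEdgeCount G ↑σ = edgeInCount G.edgeFinset σ := by
  classical
  have hset : {e : Sym2 (Fin n) | e ∈ G.edgeSet ∧ ∀ v ∈ e, v ∈ (↑σ : Set (Fin n))}
      = ↑(G.edgeFinset.filter (fun e => ∀ v ∈ e, v ∈ σ)) := by
    ext e
    simp [SimpleGraph.mem_edgeFinset]
  rw [inducedEdgeCount, hset, Set.ncard_coe_finset, edgeInCount]

/-- the polytope `{x : Σ x_i = n + |E|, Σ_{i∈σ} x_i ≥ |σ| + |E(G[σ])|}`
equals `(1/2)·Zon(G) + (1/2)·d_G + 1`. -/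
theorem stmt2 (n : ℕ) (G : SimpleGraph (Fin n)) [DecidableRel G.Adj] :
    {y : Fin n → ℝ |
        (∑ i, y i) = ((n + G.edgeSet.ncard : ℕ) : ℝ) ∧
        ∀ σ : Finset (Fin n),
          ((σ.card + inducedEdgeCount G ↑σ : ℕ) : ℝ) ≤ ∑ i ∈ σ, y i} =
      (1/2 : ℝ) • graphicalZonotope G +
        ({fun i => (1/2 : ℝ) * (G.degree i : ℝ) + 1} : Set (Fin n → ℝ)) := by
  classical
  have hedge : G.edgeSet.ncard = G.edgeFinset.card := by
    rw [← SimpleGraph.coe_edgeFinset, Set.ncard_coe_finset]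
  have hdiag : ∀ e ∈ G.edgeFinset, ¬ e.IsDiag :=
    fun e he => G.not_isDiag_of_mem_edgeSet (SimpleGraph.mem_edgeFinset.1 he)
  rw [rhs_eq, ← Qset_eq _ hdiag]
  ext y
  simp only [Set.mem_add, Set.mem_singleton_iff, Set.mem_setOf_eq]
  obtain ⟨o, ho⟩ : ∃ o : Fin n → ℝ, o = fun _ => (1:ℝ) := ⟨_, rfl⟩
  have ho_app : ∀ i, o i = 1 := fun i => by rw [ho]
  constructor
  · rintro ⟨hsum, hineq⟩
    refine ⟨y - o, ⟨?_, ?_⟩, o, by rw [ho], by abel⟩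
    · have h1 : ∑ i, (y - o) i = (∑ i, y i) - n := by
        simp [Pi.sub_apply, Finset.sum_sub_distrib, ho_app]
      rw [h1, hsum, hedge]
      push_cast
      ring
    · intro σ
      have h2 := hineq σ
      rw [inducedEdgeCount_eq] at h2
      have h1 : ∑ i ∈ σ, (y - o) i = (∑ i ∈ σ, y i) - σ.card := by
        simp [Pi.sub_apply, Finset.sum_sub_distrib, ho_app]
      rw [h1]
      push_cast at h2 ⊢
      linarith
  · rintro ⟨w, ⟨hwsum, hwineq⟩, c, rfl, rfl⟩
    rw [← ho]
    constructor
    · have h1 : ∑ i, (w + o) i = (∑ i, w i) + n := by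
        simp [Pi.add_apply, Finset.sum_add_distrib, ho_app]
      rw [h1, hwsum, hedge]
      push_cast
      ring
    · intro σ
      have h2 := hwineq σ
      rw [← inducedEdgeCount_eq] at h2
      have h1 : ∑ i ∈ σ, (w + o) i = (∑ i ∈ σ, w i) + σ.card := by
        simp [Pi.add_apply, Finset.sum_add_distrib, ho_app]
      rw [h1]
      push_cast at h2 ⊢
      linarith
end

section
/- Let P and Q be polytopes in ℝ^n (convex hulls of finite sets), each of affine dimension n−1, such that the affine hulls aff(P) and aff(Q) are parallel and disjoint affine hyperplanes. Then for every y ∈ conv(P ∪ Q) the following are equivalent: (1) y lies in the topological interior of conv(P ∪ Q); (2) there exist p ∈ relint(P) and q ∈ Q such that y lies in the open segment (p,q); (3) there exist p ∈ relint(P) and q ∈ relint(Q) such that y lies in the open segment (p,q). -/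
/-!
Choose an affine function `f` with `aff P = {f = 0}` and `aff Q = {f = 1}`; every point `u` of
`conv (P ∪ Q)` is then `(1 - f u) • p + f u • q` for some `p ∈ P`, `q ∈ Q`.

(2) ⇒ (1): the central projection from `q` onto the hyperplane `f = 0` is continuous near `y` and
sends `y` to `p ∈ relint P`, so it maps a neighbourhood of `y` into `P`; that neighbourhood lies
in the hull.

(1) ⇒ (3): `f` is an open map, so `t = f y ∈ (0, 1)`. Let `y'` be the point at level `t` on a
segment joining relative-interior points `p₀ ∈ P`, `q₀ ∈ Q`. Pushing `y` slightly past itself,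
away from `y'`, gives a point `z = (1 - t) • p₁ + t • q₁` of the hull, and `y` is a convex
combination of `y'` and `z` with positive weight on `y'`; regrouping writes `y` at level `t`
between a point of `relint P` and a point of `relint Q`.
-/

open Set Filter Topology AffineMap Module

theorem mem_intrinsicInterior_iff_mem_nhdsWithin {𝕜 V P : Type*} [Ring 𝕜] [AddCommGroup V]
    [Module 𝕜 V] [TopologicalSpace P] [AddTorsor V P] {s : Set P} {x : P} :
    x ∈ intrinsicInterior 𝕜 s ↔ x ∈ affineSpan 𝕜 s ∧ s ∈ 𝓝[(affineSpan 𝕜 s : Set P)] x := by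
  constructor
  · rintro ⟨x, hx, rfl⟩
    rw [← map_nhds_subtype_val]
    exact ⟨x.2, mem_interior_iff_mem_nhds.mp hx⟩
  · rintro ⟨hx, hs⟩
    rw [← map_nhds_subtype_val ⟨x, hx⟩] at hs
    exact ⟨⟨x, hx⟩, mem_interior_iff_mem_nhds.mpr hs, rfl⟩

theorem AffineSubspace.exists_affineMap_preimage_eq_zero_one {K E : Type*} [Field K]
    [AddCommGroup E] [Module K E] [FiniteDimensional K E] {s₁ s₂ : AffineSubspace K E}
    (hdim : finrank K s₁.direction = finrank K E - 1) (hpar : s₁.Parallel s₂)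
    (hdisj : Disjoint (s₁ : Set E) s₂) {a b : E} (ha : a ∈ s₁) (hb : b ∈ s₂) :
    ∃ f : E →ᵃ[K] K, (s₁ : Set E) = f ⁻¹' {0} ∧ (s₂ : Set E) = f ⁻¹' {1} := by
  set W := s₁.direction
  have hv : b -ᵥ a ∉ W := fun h ↦
    hdisj.ne_of_mem ((vsub_right_mem_direction_iff_mem ha b).mp h) hb rfl
  obtain ⟨ℓ, hℓv, hℓW⟩ := Submodule.exists_dual_map_eq_bot_of_notMem hv inferInstance
  have hker : LinearMap.ker ℓ = W := by
    refine (Submodule.eq_of_le_of_finrank_le (LinearMap.le_ker_iff_map.mpr hℓW) ?_).symm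
    have hker_ne_top : LinearMap.ker ℓ ≠ ⊤ := fun h ↦
      hℓv (LinearMap.mem_ker.mp (h ▸ Submodule.mem_top))
    have := Submodule.finrank_lt hker_ne_top
    omega
  set g : E →ₗ[K] K := (ℓ (b -ᵥ a))⁻¹ • ℓ
  have hg : ∀ v, g v = 0 ↔ v ∈ W := fun v ↦ by
    simp only [g, ← hker, LinearMap.mem_ker, LinearMap.smul_apply, smul_eq_mul, mul_eq_zero,
      inv_eq_zero, hℓv, false_or]
  have hgv : g (b -ᵥ a) = 1 := inv_mul_cancel₀ hℓv
  refine ⟨g.toAffineMap.comp (AffineEquiv.vaddConst K a).symm.toAffineMap, ?_, ?_⟩ <;> ext x <;>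
    simp only [SetLike.mem_coe, mem_preimage, mem_singleton_iff, coe_comp, Function.comp_apply,
      AffineEquiv.coe_toAffineMap, AffineEquiv.vaddConst_symm_apply, LinearMap.coe_toAffineMap]
  · rw [hg, vsub_right_mem_direction_iff_mem ha]
  · rw [← vsub_right_mem_direction_iff_mem hb, ← hpar.direction_eq, ← hg,
      ← vsub_sub_vsub_cancel_right x b a, map_sub, hgv, sub_eq_zero]

theorem AffineMap.apply_lineMap_of_eq_zero_of_eq_one {k V P : Type*} [Ring k] [AddCommGroup V]
    [Module k V] [AddTorsor V P] (f : P →ᵃ[k] k) {p q : P} (hp : f p = 0) (hq : f q = 1)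
    (t : k) : f (lineMap p q t) = t := by
  rw [apply_lineMap, hp, hq, lineMap_apply_module]
  simp

theorem exists_lineMap_eq_of_mem_convexJoin {E : Type*} [AddCommGroup E] [Module ℝ E]
    {P Q : Set E} {f : E →ᵃ[ℝ] ℝ} (hP : ∀ p ∈ P, f p = 0) (hQ : ∀ q ∈ Q, f q = 1)
    {u : E} (hu : u ∈ convexJoin ℝ P Q) :
    f u ∈ Icc 0 1 ∧ ∃ p ∈ P, ∃ q ∈ Q, lineMap p q (f u) = u := by
  obtain ⟨p, hp, q, hq, hu⟩ := mem_convexJoin.mp hu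
  rw [segment_eq_image_lineMap] at hu
  obtain ⟨t, ht, rfl⟩ := hu
  rw [f.apply_lineMap_of_eq_zero_of_eq_one (hP p hp) (hQ q hq)]
  exact ⟨ht, p, hp, q, hq, rfl⟩

section TopologicalVectorSpace

variable {E : Type*} [AddCommGroup E] [Module ℝ E] [TopologicalSpace E]
  [IsTopologicalAddGroup E] [ContinuousSMul ℝ E] {P Q : Set E} {f : E →ᵃ[ℝ] ℝ}

theorem Convex.lineMap_mem_intrinsicInterior {s : Set E} (hs : Convex ℝ s) {x y : E}
    (hx : x ∈ intrinsicInterior ℝ s) (hy : y ∈ s) {t : ℝ} (ht₀ : 0 ≤ t) (ht₁ : t < 1) :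
    lineMap x y t ∈ intrinsicInterior ℝ s := by
  set A := affineSpan ℝ s
  obtain ⟨hxA, hsx⟩ := mem_intrinsicInterior_iff_mem_nhdsWithin.mp hx
  have hyA : y ∈ A := subset_affineSpan ℝ s hy
  have hc : 1 - t ≠ 0 := by linarith
  rw [← lineMap_apply_one_sub]
  set ψ : E → E := fun w ↦ lineMap y w (1 - t)⁻¹
  have hψ : Tendsto ψ (𝓝[(A : Set E)] lineMap y x (1 - t)) (𝓝[(A : Set E)] x) := by
    have hψx : ψ (lineMap y x (1 - t)) = x := by
      simp only [ψ, lineMap_lineMap_right, inv_mul_cancel₀ hc, lineMap_apply_one]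
    have hψc : Continuous ψ := lineMap_continuous_uncurry.comp
      (continuous_const.prodMk (continuous_id.prodMk continuous_const))
    have h := hψc.continuousWithinAt.tendsto_nhdsWithin (x := lineMap y x (1 - t))
      fun w hw ↦ AffineMap.lineMap_mem (Q := A) _ hyA hw
    rwa [hψx] at h
  refine mem_intrinsicInterior_iff_mem_nhdsWithin.mpr ⟨AffineMap.lineMap_mem _ hyA hxA, ?_⟩
  filter_upwards [hψ hsx] with w hw
  have := hs.lineMap_mem hy hw (t := 1 - t) ⟨by linarith, by linarith⟩
  rwa [lineMap_lineMap_right, mul_inv_cancel₀ hc, lineMap_apply_one] at this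

theorem mem_Ioo_of_mem_interior_convexJoin (hP : ∀ p ∈ P, f p = 0) (hQ : ∀ q ∈ Q, f q = 1)
    {p q y : E} (hp : p ∈ P) (hq : q ∈ Q) (hy : y ∈ interior (convexJoin ℝ P Q)) :
    f y ∈ Ioo 0 1 := by
  have hsurj : Function.Surjective f.linear := fun r ↦ ⟨r • (q -ᵥ p), by
    rw [map_smul, f.linearMap_vsub, hP p hp, hQ q hq, smul_eq_mul, vsub_eq_sub, sub_zero,
      mul_one]⟩
  have hopen : IsOpenMap f :=
    isOpenMap_linear_iff.mp (f.linear.isOpenMap_of_finiteDimensional hsurj)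
  rw [← interior_Icc]
  refine interior_maximal ?_ (hopen _ isOpen_interior) (mem_image_of_mem f hy)
  rintro _ ⟨u, hu, rfl⟩
  exact (exists_lineMap_eq_of_mem_convexJoin hP hQ (interior_subset hu)).1

end TopologicalVectorSpace

section FiniteDimensional

variable {E : Type*} [NormedAddCommGroup E] [NormedSpace ℝ E] [FiniteDimensional ℝ E]
  {P Q : Set E} {f : E →ᵃ[ℝ] ℝ}

theorem openSegment_subset_interior_convexJoin (hPf : (affineSpan ℝ P : Set E) = f ⁻¹' {0})
    {p q : E} (hp : p ∈ intrinsicInterior ℝ P) (hq : q ∈ Q) (hfq : f q = 1) :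
    openSegment ℝ p q ⊆ interior (convexJoin ℝ P Q) := by
  rw [openSegment_eq_image_lineMap]
  rintro _ ⟨t, ht, rfl⟩
  set y := lineMap p q t with hy
  have hfp : f p = 0 := by
    simpa [hPf] using subset_affineSpan ℝ P (intrinsicInterior_subset hp)
  have hfy : f y = t := f.apply_lineMap_of_eq_zero_of_eq_one hfp hfq t
  have hf := f.continuous_of_finiteDimensional
  -- central projection from `q` onto the hyperplane `f = 0`
  set g : E → E := fun u ↦ lineMap q u (1 - f u)⁻¹
  have hfg : ∀ u, f u ≠ 1 → f (g u) = 0 := by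
    intro u hu
    have : 1 - f u ≠ 0 := sub_ne_zero.mpr hu.symm
    rw [apply_lineMap, hfq, lineMap_apply_module]
    field_simp
    ring
  have hug : ∀ u, f u ≠ 1 → lineMap (g u) q (f u) = u := by
    intro u hu
    rw [← lineMap_apply_one_sub, lineMap_lineMap_right,
      mul_inv_cancel₀ (sub_ne_zero.mpr hu.symm), lineMap_apply_one]
  have hfy₁ : 1 - f y ≠ 0 := by rw [hfy]; linarith [ht.2]
  have hgy : g y = p := by
    simp only [g]
    rw [hfy, hy, ← lineMap_apply_one_sub q, lineMap_lineMap_right,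
      inv_mul_cancel₀ (hfy ▸ hfy₁), lineMap_apply_one]
  have hgc : ContinuousAt g y := by
    simp only [g, lineMap_apply_module']
    exact (((continuousAt_const.sub hf.continuousAt).inv₀ hfy₁).smul
      (continuousAt_id.sub continuousAt_const)).add continuousAt_const
  have hlev : ∀ᶠ u in 𝓝 y, f u ∈ Ioo 0 1 :=
    hf.continuousAt.preimage_mem_nhds (hfy ▸ isOpen_Ioo.mem_nhds ht)
  have hgP : ∀ᶠ u in 𝓝 y, g u ∈ P := by
    have : Tendsto g (𝓝 y) (𝓝[(affineSpan ℝ P : Set E)] p) :=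
      tendsto_nhdsWithin_iff.mpr ⟨hgy ▸ hgc, hlev.mono fun u hu ↦ hPf ▸ hfg u hu.2.ne⟩
    exact this (mem_intrinsicInterior_iff_mem_nhdsWithin.mp hp).2
  rw [mem_interior_iff_mem_nhds]
  filter_upwards [hlev, hgP] with u hu hgu
  refine mem_convexJoin.mpr ⟨g u, hgu, q, hq, ?_⟩
  rw [segment_eq_image_lineMap]
  exact ⟨f u, Ioo_subset_Icc_self hu, hug u hu.2.ne⟩

theorem exists_mem_openSegment_of_mem_interior_convexJoin (hPc : Convex ℝ P)
    (hQc : Convex ℝ Q) (hPne : P.Nonempty) (hQne : Q.Nonempty) (hP : ∀ p ∈ P, f p = 0)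
    (hQ : ∀ q ∈ Q, f q = 1) {y : E} (hy : y ∈ interior (convexJoin ℝ P Q)) :
    ∃ p ∈ intrinsicInterior ℝ P, ∃ q ∈ intrinsicInterior ℝ Q, y ∈ openSegment ℝ p q := by
  obtain ⟨p₀, hp₀⟩ := hPne.intrinsicInterior hPc
  obtain ⟨q₀, hq₀⟩ := hQne.intrinsicInterior hQc
  have hfp₀ := hP p₀ (intrinsicInterior_subset hp₀)
  have hfq₀ := hQ q₀ (intrinsicInterior_subset hq₀)
  set t := f y
  have ht : t ∈ Ioo 0 1 := mem_Ioo_of_mem_interior_convexJoin hP hQ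
    (intrinsicInterior_subset hp₀) (intrinsicInterior_subset hq₀) hy
  set y' := lineMap p₀ q₀ t with hy'
  obtain ⟨ε, hzK, hε⟩ : ∃ ε : ℝ, lineMap y' y (1 + ε) ∈ convexJoin ℝ P Q ∧ 0 < ε := by
    have : Tendsto (fun ε : ℝ ↦ lineMap y' y (1 + ε)) (𝓝[>] 0) (𝓝 y) := by
      refine (Continuous.tendsto' ?_ 0 y (by simp)).mono_left nhdsWithin_le_nhds
      exact lineMap_continuous.comp (continuous_const.add continuous_id)
    exact ((this.eventually (mem_interior_iff_mem_nhds.mp hy)).and self_mem_nhdsWithin).exists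
  have hfz : f (lineMap y' y (1 + ε)) = t := by
    rw [apply_lineMap, hy', f.apply_lineMap_of_eq_zero_of_eq_one hfp₀ hfq₀, lineMap_same_apply]
  obtain ⟨-, p₁, hp₁, q₁, hq₁, hz⟩ := exists_lineMap_eq_of_mem_convexJoin hP hQ hzK
  rw [hfz] at hz
  set θ := (1 + ε)⁻¹
  have hθ₀ : 0 ≤ θ := by positivity
  have hθ₁ : θ < 1 := inv_lt_one_of_one_lt₀ (by linarith)
  refine ⟨lineMap p₀ p₁ θ, hPc.lineMap_mem_intrinsicInterior hp₀ hp₁ hθ₀ hθ₁,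
    lineMap q₀ q₁ θ, hQc.lineMap_mem_intrinsicInterior hq₀ hq₁ hθ₀ hθ₁, ?_⟩
  rw [openSegment_eq_image_lineMap]
  refine ⟨t, ht, ?_⟩
  calc lineMap (lineMap p₀ p₁ θ) (lineMap q₀ q₁ θ) t
      = lineMap y' (lineMap p₁ q₁ t) θ := by simp only [hy', lineMap_apply_module]; module
    _ = y := by rw [hz, lineMap_lineMap_right, inv_mul_cancel₀ (by linarith), lineMap_apply_one]

end FiniteDimensional

theorem stmt3_general (n : ℕ) (P Q : Set (Fin n → ℝ))
    (hP : ∃ s : Finset (Fin n → ℝ), P = convexHull ℝ (↑s : Set (Fin n → ℝ)))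
    (hQ : ∃ s : Finset (Fin n → ℝ), Q = convexHull ℝ (↑s : Set (Fin n → ℝ)))
    (hPdim : Module.finrank ℝ (affineSpan ℝ P).direction = n - 1)
    (hpar : (affineSpan ℝ P).Parallel (affineSpan ℝ Q))
    (hdisj : Disjoint (affineSpan ℝ P : Set (Fin n → ℝ)) (affineSpan ℝ Q : Set (Fin n → ℝ)))
    (y : Fin n → ℝ) :
    (y ∈ interior (convexHull ℝ (P ∪ Q)) ↔
      ∃ p ∈ intrinsicInterior ℝ P, ∃ q ∈ Q, y ∈ openSegment ℝ p q) ∧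
    (y ∈ interior (convexHull ℝ (P ∪ Q)) ↔
      ∃ p ∈ intrinsicInterior ℝ P, ∃ q ∈ intrinsicInterior ℝ Q, y ∈ openSegment ℝ p q) := by
  have hPc : Convex ℝ P := by obtain ⟨s, rfl⟩ := hP; exact convex_convexHull ℝ _
  have hQc : Convex ℝ Q := by obtain ⟨s, rfl⟩ := hQ; exact convex_convexHull ℝ _
  have hempty :=
    (AffineSubspace.affineSpan_parallel_iff_vectorSpan_eq_and_eq_empty_iff_eq_empty.mp hpar).2
  rcases P.eq_empty_or_nonempty with rfl | ⟨a, ha⟩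
  · obtain rfl : Q = ∅ := hempty.mp rfl
    simp
  obtain ⟨b, hb⟩ : Q.Nonempty := nonempty_iff_ne_empty.mpr fun h ↦ by
    simp [hempty.mpr h] at ha
  obtain ⟨f, hfP, hfQ⟩ := AffineSubspace.exists_affineMap_preimage_eq_zero_one
    (by rwa [finrank_fin_fun]) hpar hdisj (subset_affineSpan ℝ P ha) (subset_affineSpan ℝ Q hb)
  have hP0 : ∀ p ∈ P, f p = 0 := fun p hp ↦ by simpa [hfP] using subset_affineSpan ℝ P hp
  have hQ1 : ∀ q ∈ Q, f q = 1 := fun q hq ↦ by simpa [hfQ] using subset_affineSpan ℝ Q hq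
  rw [hPc.convexHull_union hQc ⟨a, ha⟩ ⟨b, hb⟩]
  have h21 : (∃ p ∈ intrinsicInterior ℝ P, ∃ q ∈ Q, y ∈ openSegment ℝ p q) →
      y ∈ interior (convexJoin ℝ P Q) := fun ⟨p, hp, q, hq, hy⟩ ↦
    openSegment_subset_interior_convexJoin hfP hp hq (hQ1 q hq) hy
  have h13 := exists_mem_openSegment_of_mem_interior_convexJoin (y := y) hPc hQc ⟨a, ha⟩
    ⟨b, hb⟩ hP0 hQ1
  have h32 : (∃ p ∈ intrinsicInterior ℝ P, ∃ q ∈ intrinsicInterior ℝ Q,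
      y ∈ openSegment ℝ p q) → ∃ p ∈ intrinsicInterior ℝ P, ∃ q ∈ Q, y ∈ openSegment ℝ p q :=
    fun ⟨p, hp, q, hq, hy⟩ ↦ ⟨p, hp, q, intrinsicInterior_subset hq, hy⟩
  exact ⟨⟨h32 ∘ h13, h21⟩, ⟨h13, h21 ∘ h32⟩⟩

/-- for polytopes `P`, `Q` of affine dimension `n-1` in `ℝⁿ` whose affine hulls
are parallel and disjoint hyperplanes, a point `y ∈ conv(P ∪ Q)` lies in the interior of
`conv(P ∪ Q)` iff it lies on an open segment from a relative-interior point of `P` to a point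
of `Q`, iff it lies on an open segment from a relative-interior point of `P` to a
relative-interior point of `Q`. -/
theorem stmt3 (n : ℕ) (P Q : Set (Fin n → ℝ))
    (hP : ∃ s : Finset (Fin n → ℝ), P = convexHull ℝ (↑s : Set (Fin n → ℝ)))
    (hQ : ∃ s : Finset (Fin n → ℝ), Q = convexHull ℝ (↑s : Set (Fin n → ℝ)))
    (hPdim : Module.finrank ℝ (affineSpan ℝ P).direction = n - 1)
    (hQdim : Module.finrank ℝ (affineSpan ℝ Q).direction = n - 1)
    (hpar : (affineSpan ℝ P).Parallel (affineSpan ℝ Q))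
    (hdisj : Disjoint (affineSpan ℝ P : Set (Fin n → ℝ)) (affineSpan ℝ Q : Set (Fin n → ℝ)))
    (y : Fin n → ℝ) (hy : y ∈ convexHull ℝ (P ∪ Q)) :
    (y ∈ interior (convexHull ℝ (P ∪ Q)) ↔
      ∃ p ∈ intrinsicInterior ℝ P, ∃ q ∈ Q, y ∈ openSegment ℝ p q) ∧
    (y ∈ interior (convexHull ℝ (P ∪ Q)) ↔
      ∃ p ∈ intrinsicInterior ℝ P, ∃ q ∈ intrinsicInterior ℝ Q, y ∈ openSegment ℝ p q) :=
  stmt3_general n P Q hP hQ hPdim hpar hdisj y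
end

section
/- Let P and Q be polytopes in ℝ^n (convex hulls of finite sets), each of affine dimension n−1, such that the affine hulls aff(P) and aff(Q) are parallel and disjoint affine hyperplanes, and let x ∈ P and z ∈ Q. Then the open segment (x,z) is contained in the topological boundary of conv(P ∪ Q) if and only if for every p ∈ relint(P) and every ε > 0 one has z + ε(x − p) ∉ Q; equivalently, the open segment (x,z) is contained in the topological interior of conv(P ∪ Q) if and only if there exist p ∈ relint(P) and ε > 0 such that z + ε(x − p) ∈ Q. -/
/-!
The affine hulls of `P` and `Q` are the level sets `f = 0` and `f = 1` of an affine function `f`.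
A point `y` of level `t = f y ∈ (0, 1)` is interior to `conv (P ∪ Q)` iff `y = (1 - t) p + t q`
with `p ∈ relint P` and `q ∈ Q`: such a representation survives small perturbations of `y`
(absorbed by `p` inside `aff P`), and conversely an interior point `y` can be pushed slightly
away from `(1 - t) p₀ + t q₀` with `p₀ ∈ relint P`, which mixes `p₀` into the `P`-component.
For `y = (1 - t) x + t z` this forces `q = z + ((1 - t) / t) (x - p)`; as moving `p` towards `x`
lets `ε` take any positive value, the criterion does not depend on `t`.
-/

open Set Filter Topology AffineMap Module

theorem AffineSubspace.Parallel.exists_affineMap_preimage_eq_zero_and_one {k E : Type*} [Field k]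
    [AddCommGroup E] [Module k E] [FiniteDimensional k E] {A B : AffineSubspace k E}
    (hAB : A.Parallel B) (hdisj : Disjoint (A : Set E) B)
    (hdim : finrank k A.direction = finrank k E - 1)
    {x z : E} (hx : x ∈ A) (hz : z ∈ B) :
    ∃ f : E →ᵃ[k] k, (A : Set E) = f ⁻¹' {0} ∧ (B : Set E) = f ⁻¹' {1} := by
  have hd : z - x ∉ A.direction := fun h =>
    disjoint_left.1 hdisj ((vsub_right_mem_direction_iff_mem hx z).1 h) hz
  obtain ⟨g, hc, hgA⟩ := A.direction.exists_dual_map_eq_bot_of_notMem hd inferInstance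
  have hker : LinearMap.ker g = A.direction := by
    refine (Submodule.eq_of_le_of_finrank_le (LinearMap.le_ker_iff_map.2 hgA) ?_).symm
    have hne : LinearMap.ker g ≠ ⊤ := fun h => hc (LinearMap.ker_eq_top.1 h ▸ rfl)
    have := Submodule.finrank_lt hne
    omega
  let f : E →ᵃ[k] k :=
    { toFun := fun w => (g (z - x))⁻¹ * g (w - x)
      linear := (g (z - x))⁻¹ • g
      map_vadd' := fun w v => by simp [vadd_eq_add, add_sub_assoc, mul_add] }
  refine ⟨f, ?_, ?_⟩
  · ext w
    change w ∈ A ↔ (g (z - x))⁻¹ * g (w - x) = 0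
    rw [← vsub_right_mem_direction_iff_mem hx, ← hker, LinearMap.mem_ker, vsub_eq_sub,
      mul_eq_zero, inv_eq_zero, or_iff_right hc]
  · ext w
    change w ∈ B ↔ (g (z - x))⁻¹ * g (w - x) = 1
    rw [← vsub_right_mem_direction_iff_mem hz, ← hAB.direction_eq, ← hker, LinearMap.mem_ker,
      vsub_eq_sub, inv_mul_eq_one₀ hc, ← sub_sub_sub_cancel_right w z x, map_sub, sub_eq_zero,
      eq_comm]

section IntrinsicInterior

variable {E : Type*} [NormedAddCommGroup E] [NormedSpace ℝ E] {s : Set E} {x : E}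

theorem mem_intrinsicInterior_iff_eventually :
    x ∈ intrinsicInterior ℝ s ↔
      x ∈ affineSpan ℝ s ∧ ∀ᶠ y in 𝓝 x, y ∈ affineSpan ℝ s → y ∈ s := by
  constructor
  · rintro ⟨x, hx, rfl⟩
    obtain ⟨u, hu, hus⟩ := (mem_nhds_subtype _ _ _).1 (mem_interior_iff_mem_nhds.1 hx)
    exact ⟨x.2, by filter_upwards [hu] with y hy hyA using hus (show ⟨y, hyA⟩ ∈ _ from hy)⟩
  · rintro ⟨hxA, hx⟩
    exact ⟨⟨x, hxA⟩, mem_interior_iff_mem_nhds.2 ((mem_nhds_subtype _ _ _).2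
      ⟨_, hx, fun y hy => hy y.2⟩), rfl⟩

theorem Convex.lineMap_mem_intrinsicInterior_s4 (hs : Convex ℝ s) {p q : E}
    (hp : p ∈ intrinsicInterior ℝ s) (hq : q ∈ s) {t : ℝ} (ht : t ∈ Ico 0 1) :
    lineMap p q t ∈ intrinsicInterior ℝ s := by
  obtain ⟨hpA, hp⟩ := mem_intrinsicInterior_iff_eventually.1 hp
  have hqA : q ∈ affineSpan ℝ s := subset_affineSpan ℝ s hq
  have hinv : (1 - t)⁻¹ * (1 - t) = 1 := inv_mul_cancel₀ (by linarith [ht.2])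
  have hlim : Tendsto (fun y => lineMap q y (1 - t)⁻¹) (𝓝 (lineMap p q t)) (𝓝 p) := by
    have hc : Continuous (fun y : E => lineMap q y (1 - t)⁻¹) := by
      simp only [lineMap_apply_module]; fun_prop
    have hp' : lineMap q (lineMap p q t) (1 - t)⁻¹ = p := by
      rw [← lineMap_apply_one_sub q p t, lineMap_lineMap_right, hinv, lineMap_apply_one]
    simpa only [hp'] using hc.tendsto (lineMap p q t)
  refine mem_intrinsicInterior_iff_eventually.2 ⟨AffineMap.lineMap_mem t hpA hqA, ?_⟩
  filter_upwards [hlim.eventually hp] with y hy hyA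
  have hmem : lineMap q (lineMap q y (1 - t)⁻¹) (1 - t) ∈ s :=
    hs.lineMap_mem hq (hy (AffineMap.lineMap_mem _ hqA hyA))
      ⟨by linarith [ht.2], by linarith [ht.1]⟩
  rwa [lineMap_lineMap_right, mul_comm, hinv, lineMap_apply_one] at hmem

end IntrinsicInterior

section Slab

variable {E : Type*} [NormedAddCommGroup E] [NormedSpace ℝ E] {P Q : Set E} {f : E →ᵃ[ℝ] ℝ}

theorem lineMap_mem_interior_convexJoin (hf : Continuous f)
    (hPf : (affineSpan ℝ P : Set E) = f ⁻¹' {0}) {p q : E} (hp : p ∈ intrinsicInterior ℝ P)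
    (hq : q ∈ Q) (hfq : f q = 1) {t : ℝ} (ht : t ∈ Ioo 0 1) :
    lineMap p q t ∈ interior (convexJoin ℝ P Q) := by
  obtain ⟨hpA, hp⟩ := mem_intrinsicInterior_iff_eventually.1 hp
  have hfp : f p = 0 := hPf.subset hpA
  have hfy : f (lineMap p q t) = t := by simp [apply_lineMap, hfp, hfq, lineMap_apply_ring]
  let g : E → E := fun w => lineMap q w (1 - f w)⁻¹
  have hg : ∀ w, f w ≠ 1 → g w ∈ affineSpan ℝ P ∧ lineMap (g w) q (f w) = w := by
    intro w hw
    have hinv : (1 - f w)⁻¹ * (1 - f w) = 1 := inv_mul_cancel₀ (sub_ne_zero.2 hw.symm)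
    refine ⟨?_, ?_⟩
    · change g w ∈ (affineSpan ℝ P : Set E)
      rw [hPf, mem_preimage, mem_singleton_iff, apply_lineMap, hfq, lineMap_apply_ring]
      field_simp
      ring
    · rw [← lineMap_apply_one_sub, lineMap_lineMap_right, mul_comm, hinv, lineMap_apply_one]
  have hgy : g (lineMap p q t) = p := by
    change lineMap q (lineMap p q t) (1 - f (lineMap p q t))⁻¹ = p
    rw [hfy, ← lineMap_apply_one_sub q p t, lineMap_lineMap_right,
      inv_mul_cancel₀ (sub_ne_zero.2 ht.2.ne'), lineMap_apply_one]
  have hgc : ContinuousAt g (lineMap p q t) := by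
    have hne : 1 - f (lineMap p q t) ≠ 0 := by rw [hfy]; linarith [ht.2]
    simp only [g, lineMap_apply_module]
    fun_prop (disch := simpa only [lineMap_apply_module] using hne)
  have hgP : ∀ᶠ w in 𝓝 (lineMap p q t), g w ∈ affineSpan ℝ P → g w ∈ P := by
    rw [← hgy] at hp
    exact hgc.eventually hp
  have hlevel : ∀ᶠ w in 𝓝 (lineMap p q t), f w ∈ Ioo 0 1 := by
    rw [← hfy] at ht
    exact hf.continuousAt.eventually_mem (isOpen_Ioo.mem_nhds ht)
  rw [mem_interior_iff_mem_nhds]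
  filter_upwards [hlevel, hgP] with w hw hgw
  obtain ⟨hgwA, hgw_eq⟩ := hg w hw.2.ne
  rw [mem_convexJoin]
  refine ⟨g w, hgw hgwA, q, hq, ?_⟩
  rw [segment_eq_image_lineMap]
  exact ⟨f w, Ioo_subset_Icc_self hw, hgw_eq⟩

theorem exists_lineMap_eq_of_mem_interior_convexJoin [FiniteDimensional ℝ E]
    (hPc : Convex ℝ P) (hQc : Convex ℝ Q) (hP : P.Nonempty) (hQ : Q.Nonempty)
    (hPf : ∀ p ∈ P, f p = 0) (hQf : ∀ q ∈ Q, f q = 1) {y : E}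
    (hy : y ∈ interior (convexJoin ℝ P Q)) :
    ∃ p ∈ intrinsicInterior ℝ P, ∃ q ∈ Q, lineMap p q (f y) = y := by
  obtain ⟨p₀, hp₀⟩ := hP.intrinsicInterior hPc
  obtain ⟨q₀, hq₀⟩ := hQ
  have hfy₀ : f (lineMap p₀ q₀ (f y)) = f y := by
    simp [apply_lineMap, hPf _ (intrinsicInterior_subset hp₀), hQf _ hq₀, lineMap_apply_ring]
  have hnear : ∀ᶠ s in 𝓝 (1 : ℝ), lineMap (lineMap p₀ q₀ (f y)) y s ∈ convexJoin ℝ P Q :=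
    (lineMap_continuous.tendsto' 1 y (by simp)).eventually (mem_interior_iff_mem_nhds.1 hy)
  obtain ⟨s, hs, hs1 : 1 < s⟩ :=
    ((hnear.filter_mono nhdsWithin_le_nhds).and (self_mem_nhdsWithin (s := Ioi 1))).exists
  obtain ⟨p', hp', q', hq', r, -, hr⟩ := by
    simpa only [mem_convexJoin, segment_eq_image_lineMap] using hs
  have hry : r = f y := by
    have := congrArg f hr
    simpa [apply_lineMap, hPf _ hp', hQf _ hq', hfy₀, lineMap_apply_ring] using this
  subst hry
  have hs1' : s⁻¹ < 1 := inv_lt_one_of_one_lt₀ hs1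
  refine ⟨lineMap p₀ p' s⁻¹, hPc.lineMap_mem_intrinsicInterior_s4 hp₀ hp' ⟨by positivity, hs1'⟩,
    lineMap q₀ q' s⁻¹, hQc.lineMap_mem hq₀ hq' ⟨by positivity, hs1'.le⟩, ?_⟩
  have hinv : s⁻¹ * s = 1 := inv_mul_cancel₀ (by positivity)
  simp only [lineMap_apply_module] at hr ⊢
  linear_combination (norm := module) s⁻¹ • hr - hinv • ((1 - f y) • p₀ + f y • q₀ - y)

end Slab

section Segment

variable {E : Type*} [NormedAddCommGroup E] [NormedSpace ℝ E] {P Q : Set E} {x z : E}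

theorem exists_mem_intrinsicInterior_add_smul_sub_mem (hPc : Convex ℝ P) (hQc : Convex ℝ Q)
    (hx : x ∈ P) (hz : z ∈ Q) {p : E} (hp : p ∈ intrinsicInterior ℝ P) {ε : ℝ} (hε : 0 < ε)
    (hpQ : z + ε • (x - p) ∈ Q) {ε' : ℝ} (hε' : 0 < ε') :
    ∃ p' ∈ intrinsicInterior ℝ P, z + ε' • (x - p') ∈ Q := by
  have hsum : 0 < ε + ε' := by positivity
  have hlt : ε' / (ε + ε') < 1 := (div_lt_one hsum).2 (by linarith)
  refine ⟨lineMap p x (ε' / (ε + ε')),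
    hPc.lineMap_mem_intrinsicInterior_s4 hp hx ⟨by positivity, hlt⟩, ?_⟩
  convert hQc.lineMap_mem hz hpQ ⟨by positivity, hlt.le⟩ using 1
  have hinv : (ε + ε')⁻¹ * (ε + ε') = 1 := inv_mul_cancel₀ hsum.ne'
  simp only [lineMap_apply_module, div_eq_mul_inv]
  linear_combination (norm := module) hinv • (ε' • (p - x))

theorem exists_lineMap_eq_lineMap_iff (hPc : Convex ℝ P) (hQc : Convex ℝ Q) (hx : x ∈ P)
    (hz : z ∈ Q) {t : ℝ} (ht : t ∈ Ioo 0 1) :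
    (∃ p ∈ intrinsicInterior ℝ P, ∃ q ∈ Q, lineMap p q t = lineMap x z t) ↔
      ∃ p ∈ intrinsicInterior ℝ P, ∃ ε : ℝ, 0 < ε ∧ z + ε • (x - p) ∈ Q := by
  have hε : 0 < (1 - t) / t := div_pos (by linarith [ht.2]) ht.1
  have hinv : t⁻¹ * t = 1 := inv_mul_cancel₀ ht.1.ne'
  constructor
  · rintro ⟨p, hp, q, hq, h⟩
    refine ⟨p, hp, (1 - t) / t, hε, ?_⟩
    convert hq using 1
    simp only [lineMap_apply_module, div_eq_mul_inv] at h ⊢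
    linear_combination (norm := module) (-t⁻¹) • h + hinv • (q - z)
  · rintro ⟨p, hp, ε, hε₀, hpQ⟩
    obtain ⟨p', hp', hp'Q⟩ :=
      exists_mem_intrinsicInterior_add_smul_sub_mem hPc hQc hx hz hp hε₀ hpQ hε
    refine ⟨p', hp', _, hp'Q, ?_⟩
    simp only [lineMap_apply_module, div_eq_mul_inv]
    linear_combination (norm := module) hinv • ((1 - t) • (x - p'))

end Segment

theorem mem_interior_convexJoin_iff_of_mem_openSegment {E : Type*} [NormedAddCommGroup E]
    [NormedSpace ℝ E] [FiniteDimensional ℝ E] {P Q : Set E} {f : E →ᵃ[ℝ] ℝ}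
    (hPc : Convex ℝ P) (hQc : Convex ℝ Q) (hPf : (affineSpan ℝ P : Set E) = f ⁻¹' {0})
    (hQf : ∀ q ∈ Q, f q = 1) {x y z : E} (hx : x ∈ P) (hz : z ∈ Q)
    (hy : y ∈ openSegment ℝ x z) :
    y ∈ interior (convexJoin ℝ P Q) ↔
      ∃ p ∈ intrinsicInterior ℝ P, ∃ ε : ℝ, 0 < ε ∧ z + ε • (x - p) ∈ Q := by
  have hPf' : ∀ p ∈ P, f p = 0 := fun p hp =>
    (hPf.subset (subset_affineSpan ℝ P hp) : p ∈ f ⁻¹' {0})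
  rw [openSegment_eq_image_lineMap] at hy
  obtain ⟨t, ht, rfl⟩ := hy
  have hft : f (lineMap x z t) = t := by
    simp [apply_lineMap, hPf' x hx, hQf z hz, lineMap_apply_ring]
  rw [← exists_lineMap_eq_lineMap_iff hPc hQc hx hz ht]
  constructor
  · intro hint
    simpa only [hft] using
      exists_lineMap_eq_of_mem_interior_convexJoin hPc hQc ⟨x, hx⟩ ⟨z, hz⟩ hPf' hQf hint
  · rintro ⟨p, hp, q, hq, h⟩
    exact h ▸ lineMap_mem_interior_convexJoin f.continuous_of_finiteDimensional hPf hp hq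
      (hQf q hq) ht

theorem stmt4_general (n : ℕ) (P Q : Set (Fin n → ℝ))
    (hP : ∃ s : Finset (Fin n → ℝ), P = convexHull ℝ (↑s : Set (Fin n → ℝ)))
    (hQ : ∃ s : Finset (Fin n → ℝ), Q = convexHull ℝ (↑s : Set (Fin n → ℝ)))
    (hPdim : Module.finrank ℝ (affineSpan ℝ P).direction = n - 1)
    (hpar : (affineSpan ℝ P).Parallel (affineSpan ℝ Q))
    (hdisj : Disjoint (affineSpan ℝ P : Set (Fin n → ℝ)) (affineSpan ℝ Q : Set (Fin n → ℝ)))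
    (x z : Fin n → ℝ) (hx : x ∈ P) (hz : z ∈ Q) :
    (openSegment ℝ x z ⊆ frontier (convexHull ℝ (P ∪ Q)) ↔
      ∀ p ∈ intrinsicInterior ℝ P, ∀ ε : ℝ, 0 < ε → z + ε • (x - p) ∉ Q) ∧
    (openSegment ℝ x z ⊆ interior (convexHull ℝ (P ∪ Q)) ↔
      ∃ p ∈ intrinsicInterior ℝ P, ∃ ε : ℝ, 0 < ε ∧ z + ε • (x - p) ∈ Q) := by
  obtain ⟨hPc, hQc⟩ : Convex ℝ P ∧ Convex ℝ Q := by
    obtain ⟨⟨s, rfl⟩, ⟨s', rfl⟩⟩ := And.intro hP hQ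
    exact ⟨convex_convexHull ℝ _, convex_convexHull ℝ _⟩
  obtain ⟨f, hPf, hQf⟩ := hpar.exists_affineMap_preimage_eq_zero_and_one hdisj
    (by rwa [Module.finrank_fin_fun]) (subset_affineSpan ℝ P hx) (subset_affineSpan ℝ Q hz)
  rw [hPc.convexHull_union hQc ⟨x, hx⟩ ⟨z, hz⟩]
  have key (y) (hy : y ∈ openSegment ℝ x z) := mem_interior_convexJoin_iff_of_mem_openSegment
    hPc hQc hPf (fun q hq => hQf.subset (subset_affineSpan ℝ Q hq)) hx hz hy
  have hclosure : openSegment ℝ x z ⊆ closure (convexJoin ℝ P Q) :=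
    ((hPc.convexJoin hQc).openSegment_subset (subset_convexJoin_left ⟨z, hz⟩ hx)
      (subset_convexJoin_right ⟨x, hx⟩ hz)).trans subset_closure
  have hmid := midpoint_mem_openSegment (𝕜 := ℝ) x z
  refine ⟨⟨fun h p hp ε hε hpQ => (h hmid).2 ((key _ hmid).2 ⟨p, hp, ε, hε, hpQ⟩),
    fun h y hy => ⟨hclosure hy, fun hint => ?_⟩⟩,
    fun h => (key _ hmid).1 (h hmid), fun h y hy => (key y hy).2 h⟩
  obtain ⟨p, hp, ε, hε, hpQ⟩ := (key y hy).1 hint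
  exact h p hp ε hε hpQ

/-- for polytopes `P`, `Q` of affine dimension `n-1` in `ℝⁿ` whose affine hulls
are parallel and disjoint hyperplanes, and `x ∈ P`, `z ∈ Q`: the open segment `(x,z)` lies
in the boundary of `conv(P ∪ Q)` iff `z + ε(x - p) ∉ Q` for every `p ∈ relint P` and `ε > 0`;
equivalently `(x,z)` lies in the interior of `conv(P ∪ Q)` iff `z + ε(x - p) ∈ Q` for some
`p ∈ relint P` and `ε > 0`. -/
theorem stmt4 (n : ℕ) (P Q : Set (Fin n → ℝ))
    (hP : ∃ s : Finset (Fin n → ℝ), P = convexHull ℝ (↑s : Set (Fin n → ℝ)))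
    (hQ : ∃ s : Finset (Fin n → ℝ), Q = convexHull ℝ (↑s : Set (Fin n → ℝ)))
    (hPdim : Module.finrank ℝ (affineSpan ℝ P).direction = n - 1)
    (hQdim : Module.finrank ℝ (affineSpan ℝ Q).direction = n - 1)
    (hpar : (affineSpan ℝ P).Parallel (affineSpan ℝ Q))
    (hdisj : Disjoint (affineSpan ℝ P : Set (Fin n → ℝ)) (affineSpan ℝ Q : Set (Fin n → ℝ)))
    (x z : Fin n → ℝ) (hx : x ∈ P) (hz : z ∈ Q) :
    (openSegment ℝ x z ⊆ frontier (convexHull ℝ (P ∪ Q)) ↔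
      ∀ p ∈ intrinsicInterior ℝ P, ∀ ε : ℝ, 0 < ε → z + ε • (x - p) ∉ Q) ∧
    (openSegment ℝ x z ⊆ interior (convexHull ℝ (P ∪ Q)) ↔
      ∃ p ∈ intrinsicInterior ℝ P, ∃ ε : ℝ, 0 < ε ∧ z + ε • (x - p) ∈ Q) :=
  stmt4_general n P Q hP hQ hPdim hpar hdisj x z hx hz
end

section
/- Let G = ([n], E) be a connected finite simple graph and k a field. Then in k[x_1,…,x_n] the ideal of acyclic orientations satisfies A_G = ⋂_{σ} ⟨ x_i^{din_σ(i)+1} : i ∈ σ ⟩, where the intersection runs over all nonempty subsets σ ⊆ [n] such that the induced subgraph G[σ] is connected, and din_σ(i) = |{ j ∈ σ : {i,j} ∈ E }| for i ∈ σ. -/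
open MvPolynomial

/-- The ideal of acyclic orientations of `G`, generated by the monomials
`∏ i, x_i ^ (indeg_O(i) + 1)` over acyclic orientations `O` of `G`. -/
noncomputable def acyclicIdeal (n : ℕ) (G : SimpleGraph (Fin n)) (K : Type*) [Field K] :
    Ideal (MvPolynomial (Fin n) K) :=
  Ideal.span {f | ∃ O : Fin n → Fin n → Prop, IsOrientation G O ∧ IsAcyclicRel O ∧
    f = ∏ i, (X i : MvPolynomial (Fin n) K) ^ (inDeg O i + 1)}

lemma IsAcyclicRel.of_map_lt {V α : Type*} [Preorder α] {O : V → V → Prop} (f : V → α)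
    (hf : ∀ u v, O u v → f v < f u) : IsAcyclicRel O := by
  have hpath : ∀ u v, Relation.TransGen O u v → f v < f u := fun u v h => by
    induction h with
    | single h => exact hf _ _ h
    | tail _ h ih => exact (hf _ _ h).trans ih
  exact fun v h => lt_irrefl _ (hpath v v h)

namespace SimpleGraph

variable {V : Type*} (G : SimpleGraph V)

lemma exists_induce_connected_closed_subset (S : Finset V) (hS : S.Nonempty) :
    ∃ σ ⊆ S, σ.Nonempty ∧ (G.induce (σ : Set V)).Connected ∧
      ∀ i ∈ σ, ∀ j ∈ S, G.Adj i j → j ∈ σ := by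
  classical
  obtain ⟨v, hv⟩ := hS
  have hfam : ({v} : Finset V) ∈
      S.powerset.filter fun σ : Finset V => (G.induce (σ : Set V)).Connected := by
    simp only [Finset.mem_filter, Finset.mem_powerset, Finset.singleton_subset_iff, hv, true_and]
    rw [Finset.coe_singleton]
    exact connected_iff _ |>.mpr ⟨.of_subsingleton, ⟨v, rfl⟩⟩
  obtain ⟨σ, hσmem, hσmax⟩ := Finset.exists_maximal ⟨_, hfam⟩
  simp only [Finset.mem_filter, Finset.mem_powerset] at hσmem hσmax
  have hσ : σ.Nonempty := Finset.coe_nonempty.mp (Set.nonempty_coe_sort.mp hσmem.2.nonempty)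
  refine ⟨σ, hσmem.1, hσ, hσmem.2, fun i hi j hj hij => ?_⟩
  have hinsert : (G.induce (insert j σ : Finset V)).Connected := by
    rw [Finset.coe_insert, Set.insert_eq, Set.union_comm]
    exact G.connected_induce_union hσmem.2.preconnected Preconnected.of_subsingleton
      hi (Set.mem_singleton j) hij
  exact hσmax ⟨Finset.insert_subset hj hσmem.1, hinsert⟩ (Finset.subset_insert j σ)
    (Finset.mem_insert_self j σ)

lemma exists_ncard_adj_lt_of_forall_connected (a : V → ℕ)
    (H : ∀ σ : Finset V, σ.Nonempty → (G.induce (σ : Set V)).Connected →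
      ∃ i ∈ σ, {j | j ∈ σ ∧ G.Adj i j}.ncard < a i)
    (S : Finset V) (hS : S.Nonempty) : ∃ i ∈ S, {j | j ∈ S ∧ G.Adj i j}.ncard < a i := by
  obtain ⟨σ, hσS, hσ, hconn, hclosed⟩ := G.exists_induce_connected_closed_subset S hS
  obtain ⟨i, hi, hlt⟩ := H σ hσ hconn
  have hnbrs : {j | j ∈ S ∧ G.Adj i j} = {j | j ∈ σ ∧ G.Adj i j} :=
    Set.ext fun j => ⟨fun h => ⟨hclosed i hi j h.1 h.2, h.2⟩, fun h => ⟨hσS h.1, h.2⟩⟩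
  exact ⟨i, hσS hi, hnbrs ▸ hlt⟩

lemma exists_injOn_ncard_adj_lt (a : V → ℕ)
    (H : ∀ S : Finset V, S.Nonempty → ∃ i ∈ S, {j | j ∈ S ∧ G.Adj i j}.ncard < a i)
    (S : Finset V) : ∃ f : V → ℕ, Set.InjOn f S ∧
      ∀ i ∈ S, {j | j ∈ S ∧ G.Adj i j ∧ f i < f j}.ncard < a i := by
  classical
  induction S using Finset.strongInduction with
  | H S ih =>
    rcases S.eq_empty_or_nonempty with rfl | hS
    · exact ⟨fun _ => 0, by simp, by simp⟩
    obtain ⟨i₀, hi₀, hlt⟩ := H S hS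
    obtain ⟨f, hinj, hf⟩ := ih (S.erase i₀) (Finset.erase_ssubset hi₀)
    -- ranked lowest, `i₀` counts all its neighbours in `S`, which `H` allows
    refine ⟨fun j => if j = i₀ then 0 else f j + 1, ?_, fun i hi => ?_⟩
    · intro x hx y hy hxy
      by_cases hx₀ : x = i₀ <;> by_cases hy₀ : y = i₀ <;>
        simp only [hx₀, hy₀, if_true, if_false] at hxy
      · exact hx₀.trans hy₀.symm
      · omega
      · omega
      · exact hinj (Finset.mem_erase.mpr ⟨hx₀, hx⟩) (Finset.mem_erase.mpr ⟨hy₀, hy⟩)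
          (Nat.add_right_cancel hxy)
    by_cases hi₀' : i = i₀
    · subst hi₀'
      exact (Set.ncard_le_ncard (t := {j | j ∈ S ∧ G.Adj i j}) (fun j hj => ⟨hj.1, hj.2.1⟩)
        (S.finite_toSet.subset fun j hj => hj.1)).trans_lt hlt
    · convert hf i (Finset.mem_erase.mpr ⟨hi₀', hi⟩) using 2
      ext j
      by_cases hj : j = i₀ <;> simp [hj, hi₀']

lemma isOrientation_of_injective {f : V → ℕ} (hf : Function.Injective f) :
    IsOrientation G fun u v => G.Adj u v ∧ f v < f u := by
  refine ⟨fun u v h => h.1, fun u v huv => ?_⟩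
  have hne : f u ≠ f v := fun h => G.ne_of_adj huv (hf h)
  constructor
  · rintro ⟨-, h⟩ ⟨-, h'⟩
    exact lt_asymm h h'
  · intro h
    exact ⟨huv, lt_of_le_of_ne (not_lt.mp fun h' => h ⟨huv.symm, h'⟩) hne.symm⟩

lemma inDeg_adj_lt (f : V → ℕ) (i : V) :
    inDeg (fun u v => G.Adj u v ∧ f v < f u) i = {j | G.Adj i j ∧ f i < f j}.ncard := by
  simp only [inDeg, G.adj_comm]

lemma exists_ncard_adj_le_inDeg [Finite V] {O : V → V → Prop} (hO : IsOrientation G O)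
    (hac : IsAcyclicRel O) (σ : Finset V) (hσ : σ.Nonempty) :
    ∃ m ∈ σ, {j | j ∈ σ ∧ G.Adj m j}.ncard ≤ inDeg O m := by
  let r : V → V → Prop := fun x y => Relation.TransGen O y x
  have : IsTrans V r := ⟨fun _ _ _ h₁ h₂ => h₂.trans h₁⟩
  have : Std.Irrefl r := ⟨hac⟩
  -- a vertex of `σ` with no directed path to another vertex of `σ` is a sink of `O` on `G[σ]`
  obtain ⟨m, hm, hmin⟩ := (Finite.wellFounded_of_trans_of_irrefl r).has_min (σ : Set V) hσ
  refine ⟨m, hm, Set.ncard_le_ncard fun j ⟨hj, hmj⟩ => ?_⟩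
  exact not_not.mp fun hjm => hmin j hj (.single ((hO.2 m j hmj).mpr hjm))

theorem exists_acyclic_orientation_inDeg_lt_iff [Fintype V] (a : V → ℕ) :
    (∃ O, IsOrientation G O ∧ IsAcyclicRel O ∧ ∀ i, inDeg O i < a i) ↔
      ∀ σ : Finset V, σ.Nonempty → (G.induce (σ : Set V)).Connected →
        ∃ i ∈ σ, {j | j ∈ σ ∧ G.Adj i j}.ncard < a i := by
  constructor
  · rintro ⟨O, hO, hac, hdeg⟩ σ hσ -
    obtain ⟨m, hm, hle⟩ := G.exists_ncard_adj_le_inDeg hO hac σ hσ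
    exact ⟨m, hm, hle.trans_lt (hdeg m)⟩
  · intro H
    obtain ⟨f, hinj, hf⟩ := G.exists_injOn_ncard_adj_lt a
      (G.exists_ncard_adj_lt_of_forall_connected a H) Finset.univ
    rw [Finset.coe_univ, Set.injOn_univ] at hinj
    refine ⟨_, G.isOrientation_of_injective hinj, .of_map_lt f fun _ _ h => h.2, fun i => ?_⟩
    simpa [inDeg_adj_lt] using hf i (Finset.mem_univ i)

end SimpleGraph

section MonomialIdeals

variable {ι K : Type*} [Field K]

lemma prod_X_pow_eq_monomial_equivFunOnFinite [Fintype ι] (d : ι → ℕ) :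
    ∏ i, (X i : MvPolynomial ι K) ^ d i = monomial (Finsupp.equivFunOnFinite.symm d) 1 := by
  rw [monomial_eq, C_1, one_mul, Finsupp.prod_fintype _ _ fun _ => pow_zero _]
  rfl

lemma mem_span_prod_X_pow_image_iff [Fintype ι] (D : Set (ι → ℕ)) (p : MvPolynomial ι K) :
    p ∈ Ideal.span ((fun d => ∏ i, (X i : MvPolynomial ι K) ^ d i) '' D) ↔
      ∀ m ∈ p.support, ∃ d ∈ D, ∀ i, d i ≤ m i := by
  simp only [prod_X_pow_eq_monomial_equivFunOnFinite]
  rw [← Set.image_image (fun s => monomial s (1 : K)), mem_ideal_span_monomial_image]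
  simp only [Set.exists_mem_image, Finsupp.le_def, Finsupp.coe_equivFunOnFinite_symm]

lemma mem_span_X_pow_image_iff (σ : Set ι) (e : ι → ℕ) (p : MvPolynomial ι K) :
    p ∈ Ideal.span ((fun i => (X i : MvPolynomial ι K) ^ e i) '' σ) ↔
      ∀ m ∈ p.support, ∃ i ∈ σ, e i ≤ m i := by
  simp only [X_pow_eq_monomial]
  rw [← Set.image_image (fun s => monomial s (1 : K)), mem_ideal_span_monomial_image]
  simp only [Set.exists_mem_image, Finsupp.single_le_iff]

end MonomialIdeals

lemma mem_acyclicIdeal_iff {n : ℕ} (G : SimpleGraph (Fin n)) {K : Type*} [Field K]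
    (p : MvPolynomial (Fin n) K) :
    p ∈ acyclicIdeal n G K ↔ ∀ m ∈ p.support, ∃ O : Fin n → Fin n → Prop,
      IsOrientation G O ∧ IsAcyclicRel O ∧ ∀ i, inDeg O i < m i := by
  have hgens : {f | ∃ O : Fin n → Fin n → Prop, IsOrientation G O ∧ IsAcyclicRel O ∧
      f = ∏ i, (X i : MvPolynomial (Fin n) K) ^ (inDeg O i + 1)} =
      (fun d => ∏ i, X i ^ d i) ''
        ((fun O i => inDeg O i + 1) '' {O | IsOrientation G O ∧ IsAcyclicRel O}) := by
    ext f
    simp [Set.image_image, eq_comm, and_assoc]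
  rw [acyclicIdeal, hgens, mem_span_prod_X_pow_image_iff]
  simp only [Set.exists_mem_image, Set.mem_ofPred_eq, and_assoc, Nat.add_one_le_iff]

theorem stmt5_general (n : ℕ) (G : SimpleGraph (Fin n))
    (K : Type*) [Field K] :
    acyclicIdeal n G K =
      ⨅ σ ∈ {σ : Finset (Fin n) | σ.Nonempty ∧ (G.induce (↑σ : Set (Fin n))).Connected},
        Ideal.span ((fun i => (X i : MvPolynomial (Fin n) K) ^
          ({j : Fin n | j ∈ σ ∧ G.Adj i j}.ncard + 1)) '' (↑σ : Set (Fin n))) := by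
  ext p
  simp only [mem_acyclicIdeal_iff, Ideal.mem_iInf, Set.mem_ofPred_eq, mem_span_X_pow_image_iff,
    Nat.add_one_le_iff]
  constructor
  · intro h σ hσ m hm
    exact (G.exists_acyclic_orientation_inDeg_lt_iff m).mp (h m hm) σ hσ.1 hσ.2
  · intro h m hm
    exact (G.exists_acyclic_orientation_inDeg_lt_iff m).mpr
      fun σ hσ hconn => h σ ⟨hσ, hconn⟩ m hm

/-- `A_G` is the intersection of the irreducible ideals
`⟨x_i ^ (din_σ(i)+1) : i ∈ σ⟩` over nonempty `σ` with `G[σ]` connected. -/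
theorem stmt5 (n : ℕ) (G : SimpleGraph (Fin n)) (hG : G.Connected)
    (K : Type*) [Field K] :
    acyclicIdeal n G K =
      ⨅ σ ∈ {σ : Finset (Fin n) | σ.Nonempty ∧ (G.induce (↑σ : Set (Fin n))).Connected},
        Ideal.span ((fun i => (X i : MvPolynomial (Fin n) K) ^
          ({j : Fin n | j ∈ σ ∧ G.Adj i j}.ncard + 1)) '' (↑σ : Set (Fin n))) :=
  stmt5_general n G K
end

section
/- Let G = ([n], E) be a connected finite simple graph and k a field. Then in k[x_1,…,x_n] the tree ideal satisfies T_G = ⋂_{O} ⟨ x_i^{outdeg_O(i)+1} : i ∈ [n] ⟩, where the intersection runs over all acyclic orientations O of G. -/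
/-! A monomial `x^d` lies in `T_G` iff `d i > dout_σ(i)` on some nonempty connected `σ`, and in
the ideal of an acyclic orientation `O` iff `d i > outdeg_O(i)` for some `i`; so the theorem is a
statement about exponent vectors. Given such a `σ`, every acyclic `O` has a vertex of `σ` with no
out-edge into `σ`, whose out-degree is then at most `dout_σ`. Conversely, if every connected `σ`
has a vertex with `d i ≤ dout_σ(i)`, then so does every nonempty `U` (pass to a maximal connected
subset of `U`: its outside neighbours lie outside `U`). Peeling such vertices off one at a time and
orienting each edge towards the end removed first gives an acyclic orientation with
`d i ≤ outdeg(i)` everywhere. -/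

open MvPolynomial

/-- Out-degree of a vertex with respect to an orientation. -/
noncomputable def outDeg {V : Type*} (O : V → V → Prop) (i : V) : ℕ :=
  {j : V | O i j}.ncard

/-- `dout_σ(i)`: the number of neighbors of `i` outside of `σ`. -/
noncomputable def doutDeg {n : ℕ} (G : SimpleGraph (Fin n)) (σ : Finset (Fin n)) (i : Fin n) :
    ℕ :=
  {j : Fin n | j ∉ σ ∧ G.Adj i j}.ncard

/-- The tree ideal of `G`, generated by the monomials `∏_{i∈σ} x_i ^ (dout_σ(i)+1)`
over nonempty `σ ⊆ [n]` with `G[σ]` connected. -/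
noncomputable def treeIdeal (n : ℕ) (G : SimpleGraph (Fin n)) (K : Type*) [Field K] :
    Ideal (MvPolynomial (Fin n) K) :=
  Ideal.span {f | ∃ σ : Finset (Fin n), σ.Nonempty ∧
    (G.induce (↑σ : Set (Fin n))).Connected ∧
    f = ∏ i ∈ σ, (X i : MvPolynomial (Fin n) K) ^ (doutDeg G σ i + 1)}

theorem Finsupp.sum_single_le_iff {σ : Type*} (s : Finset σ) (e : σ → ℕ) (d : σ →₀ ℕ) :
    ∑ i ∈ s, Finsupp.single i (e i) ≤ d ↔ ∀ i ∈ s, e i ≤ d i := by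
  classical
  simp only [Finsupp.le_def, Finsupp.finsetSum_apply, Finsupp.single_apply, Finset.sum_ite_eq']
  exact forall_congr' fun j => by split_ifs with h <;> simp [h]

theorem MvPolynomial.mem_span_range_prod_X_pow_iff {ι σ R : Type*} [CommSemiring R]
    (s : ι → Finset σ) (e : ι → σ → ℕ) (p : MvPolynomial σ R) :
    p ∈ Ideal.span (Set.range fun k => ∏ i ∈ s k, (X i : MvPolynomial σ R) ^ e k i) ↔
      ∀ d ∈ p.support, ∃ k, ∀ i ∈ s k, e k i ≤ d i := by
  have hgen : (Set.range fun k => ∏ i ∈ s k, (X i : MvPolynomial σ R) ^ e k i) =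
      (fun d => monomial d (1 : R)) '' Set.range fun k => ∑ i ∈ s k, Finsupp.single i (e k i) := by
    rw [← Set.range_comp]
    congr 1
    ext k
    simp only [Function.comp_apply, monomial_sum_one, X_pow_eq_monomial]
  simp only [hgen, mem_ideal_span_monomial_image, Set.exists_range_iff, Finsupp.sum_single_le_iff]

theorem MvPolynomial.mem_span_range_X_pow_iff {σ R : Type*} [CommSemiring R] (e : σ → ℕ)
    (p : MvPolynomial σ R) :
    p ∈ Ideal.span (Set.range fun i => (X i : MvPolynomial σ R) ^ e i) ↔
      ∀ d ∈ p.support, ∃ i, e i ≤ d i := by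
  simpa only [Finset.prod_singleton, Finset.mem_singleton, forall_eq] using
    mem_span_range_prod_X_pow_iff (fun i => {i}) (fun _ => e) p

section
variable {V : Type*} {G : SimpleGraph V} {O : V → V → Prop}

theorem IsAcyclicRel.exists_mem_forall_not [Finite V] (hO : IsAcyclicRel O) {s : Set V}
    (hs : s.Nonempty) : ∃ a ∈ s, ∀ b ∈ s, ¬ O a b := by
  have : IsTrans V (flip (Relation.TransGen O)) := ⟨fun _ _ _ hab hbc => hbc.trans hab⟩
  have : Std.Irrefl (flip (Relation.TransGen O)) := ⟨hO⟩
  obtain ⟨a, ha, hmin⟩ :=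
    (Finite.wellFounded_of_trans_of_irrefl (flip (Relation.TransGen O))).has_min s hs
  exact ⟨a, ha, fun b hb hab => hmin b hb (.single hab)⟩

theorem IsOrientation.exists_outDeg_le [Finite V] (hO : IsOrientation G O) (hac : IsAcyclicRel O)
    {σ : Finset V} (hσ : σ.Nonempty) :
    ∃ a ∈ σ, outDeg O a ≤ {j | j ∉ σ ∧ G.Adj a j}.ncard := by
  obtain ⟨a, ha, hsink⟩ := hac.exists_mem_forall_not (s := ↑σ) hσ
  refine ⟨a, ha, Set.ncard_le_ncard (fun j hj => ⟨fun hjσ => hsink j hjσ hj, hO.1 a j hj⟩)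
    (Set.toFinite _)⟩

def rankOrientation (G : SimpleGraph V) (r : V → ℕ) (a b : V) : Prop :=
  G.Adj a b ∧ r b < r a

theorem isOrientation_rankOrientation {r : V → ℕ} (hr : Function.Injective r) :
    IsOrientation G (rankOrientation G r) := by
  refine ⟨fun _ _ h => h.1, fun u v huv => ?_⟩
  have : r u ≠ r v := fun h => huv.ne (hr h)
  simp only [rankOrientation, huv, huv.symm, true_and, not_lt]
  omega

theorem isAcyclicRel_rankOrientation (r : V → ℕ) : IsAcyclicRel (rankOrientation G r) := by
  have hlt : ∀ a b, Relation.TransGen (rankOrientation G r) a b → r b < r a := by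
    intro a b hab
    induction hab with
    | single h => exact h.2
    | tail _ h ih => exact h.2.trans ih
  exact fun v hv => (hlt v v hv).false

theorem SimpleGraph.exists_connected_induce_closed_subset [Finite V] (G : SimpleGraph V)
    {U : Finset V} (hU : U.Nonempty) :
    ∃ σ ⊆ U, σ.Nonempty ∧ (G.induce ↑σ).Connected ∧ ∀ i ∈ σ, ∀ j ∈ U, G.Adj i j → j ∈ σ := by
  classical
  set S := {σ : Finset V | σ ⊆ U ∧ σ.Nonempty ∧ (G.induce ↑σ).Connected}
  obtain ⟨u, hu⟩ := hU
  have hsingle : {u} ∈ S := ⟨by simpa, by simp, by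
    rw [Finset.coe_singleton, induce_singleton_eq_top]; exact connected_top⟩
  obtain ⟨σ, ⟨hσU, hσne, hσconn⟩, hmax⟩ := (Set.toFinite S).exists_maximal ⟨_, hsingle⟩
  refine ⟨σ, hσU, hσne, hσconn, fun i hi j hj hij => ?_⟩
  -- adding the edge `ij` keeps `σ` connected, so maximality puts `j` in `σ`
  have hbig : σ ∪ {i, j} ∈ S := by
    refine ⟨Finset.union_subset hσU (by simp [Finset.insert_subset_iff, hσU hi, hj]),
      hσne.mono Finset.subset_union_left, ?_⟩
    rw [Finset.coe_union, Finset.coe_pair]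
    exact induce_union_connected hσconn.preconnected
      (induce_pair_connected_of_adj hij).preconnected ⟨i, hi, by simp⟩
  exact hmax hbig Finset.subset_union_left (by simp)

theorem exists_mem_le_ncard_of_forall_connected [Finite V] {m : V → ℕ}
    (H : ∀ σ : Finset V, σ.Nonempty → (G.induce ↑σ).Connected →
      ∃ i ∈ σ, m i ≤ {j | j ∉ σ ∧ G.Adj i j}.ncard)
    {U : Finset V} (hU : U.Nonempty) : ∃ i ∈ U, m i ≤ {j | j ∉ U ∧ G.Adj i j}.ncard := by
  obtain ⟨σ, hσU, hσne, hσconn, hclosed⟩ := G.exists_connected_induce_closed_subset hU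
  obtain ⟨i, hi, hmi⟩ := H σ hσne hσconn
  refine ⟨i, hσU hi, hmi.trans (Set.ncard_le_ncard ?_ (Set.toFinite _))⟩
  exact fun j ⟨hjσ, hij⟩ => ⟨fun hjU => hjσ (hclosed i hi j hjU hij), hij⟩

theorem exists_injective_rank [Finite V] {m : V → ℕ}
    (H : ∀ U : Finset V, U.Nonempty → ∃ i ∈ U, m i ≤ {j | j ∉ U ∧ G.Adj i j}.ncard)
    (U : Finset V) : ∃ r : V → ℕ, Function.Injective r ∧
      ∀ i ∈ U, m i ≤ {j | G.Adj i j ∧ (j ∉ U ∨ r j < r i)}.ncard := by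
  classical
  induction U using Finset.strongInduction with
  | H U ih =>
  rcases U.eq_empty_or_nonempty with rfl | hU
  · obtain ⟨r, hr⟩ := exists_injective_nat V
    exact ⟨r, hr, by simp⟩
  obtain ⟨i₀, hi₀, hm₀⟩ := H U hU
  obtain ⟨r, hr, hmr⟩ := ih (U.erase i₀) (Finset.erase_ssubset hi₀)
  refine ⟨fun j => if j = i₀ then 0 else r j + 1, fun a b hab => ?_, fun i hi => ?_⟩
  · simp only at hab
    split_ifs at hab with ha hb hb
    exacts [ha.trans hb.symm, hr (by omega)]
  by_cases hii₀ : i = i₀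
  · subst hii₀
    exact hm₀.trans (Set.ncard_le_ncard (fun j ⟨hjU, hij⟩ => ⟨hij, .inl hjU⟩) (Set.toFinite _))
  refine (hmr i (Finset.mem_erase.2 ⟨hii₀, hi⟩)).trans
    (Set.ncard_le_ncard (fun j ⟨hij, hj⟩ => ⟨hij, ?_⟩) (Set.toFinite _))
  by_cases hji₀ : j = i₀
  · simp [hji₀, hii₀]
  · simpa [hji₀, hii₀] using hj

theorem exists_isAcyclicRel_le_outDeg [Fintype V] {m : V → ℕ}
    (H : ∀ σ : Finset V, σ.Nonempty → (G.induce ↑σ).Connected →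
      ∃ i ∈ σ, m i ≤ {j | j ∉ σ ∧ G.Adj i j}.ncard) :
    ∃ O, IsOrientation G O ∧ IsAcyclicRel O ∧ ∀ i, m i ≤ outDeg O i := by
  obtain ⟨r, hr, hm⟩ :=
    exists_injective_rank (fun _ hU => exists_mem_le_ncard_of_forall_connected H hU) Finset.univ
  refine ⟨rankOrientation G r, isOrientation_rankOrientation hr, isAcyclicRel_rankOrientation r,
    fun i => (hm i (Finset.mem_univ i)).trans_eq ?_⟩
  simp [outDeg, rankOrientation]

theorem exists_connected_le_iff_forall_isAcyclicRel [Fintype V] (d : V → ℕ) :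
    (∃ σ : Finset V, σ.Nonempty ∧ (G.induce ↑σ).Connected ∧
        ∀ i ∈ σ, {j | j ∉ σ ∧ G.Adj i j}.ncard + 1 ≤ d i) ↔
      ∀ O, IsOrientation G O → IsAcyclicRel O → ∃ i, outDeg O i + 1 ≤ d i := by
  constructor
  · rintro ⟨σ, hσne, -, hσ⟩ O hO hac
    obtain ⟨a, ha, hle⟩ := hO.exists_outDeg_le hac hσne
    exact ⟨a, by grind⟩
  · contrapose!
    intro H
    obtain ⟨O, hO, hac, hle⟩ := exists_isAcyclicRel_le_outDeg (m := d) fun σ hσne hσconn =>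
      (H σ hσne hσconn).imp fun i ⟨hi, hlt⟩ => ⟨hi, Nat.le_of_lt_succ hlt⟩
    exact ⟨O, hO, hac, fun i => Nat.lt_succ_of_le (hle i)⟩

end

theorem mem_treeIdeal_iff {n : ℕ} {G : SimpleGraph (Fin n)} {K : Type*} [Field K]
    (p : MvPolynomial (Fin n) K) :
    p ∈ treeIdeal n G K ↔ ∀ d ∈ p.support, ∃ σ : Finset (Fin n), σ.Nonempty ∧
      (G.induce ↑σ).Connected ∧ ∀ i ∈ σ, doutDeg G σ i + 1 ≤ d i := by
  have hgen : {f | ∃ σ : Finset (Fin n), σ.Nonempty ∧ (G.induce ↑σ).Connected ∧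
      f = ∏ i ∈ σ, (X i : MvPolynomial (Fin n) K) ^ (doutDeg G σ i + 1)} =
      Set.range fun σ : {σ : Finset (Fin n) // σ.Nonempty ∧ (G.induce ↑σ).Connected} =>
        ∏ i ∈ σ.1, (X i : MvPolynomial (Fin n) K) ^ (doutDeg G σ i + 1) := by
    ext f
    simp [eq_comm, and_assoc]
  rw [treeIdeal, hgen, mem_span_range_prod_X_pow_iff]
  simp only [Subtype.exists, exists_prop, and_assoc]

theorem stmt6_general (n : ℕ) (G : SimpleGraph (Fin n))
    (K : Type*) [Field K] :
    treeIdeal n G K =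
      ⨅ O ∈ {O : Fin n → Fin n → Prop | IsOrientation G O ∧ IsAcyclicRel O},
        Ideal.span (Set.range fun i : Fin n =>
          (X i : MvPolynomial (Fin n) K) ^ (outDeg O i + 1)) := by
  ext p
  simp only [mem_treeIdeal_iff, Ideal.mem_iInf, mem_span_range_X_pow_iff, Set.mem_ofPred_eq,
    and_imp]
  constructor
  · intro h O hO hac d hd
    exact (exists_connected_le_iff_forall_isAcyclicRel d).1 (h d hd) O hO hac
  · intro h d hd
    exact (exists_connected_le_iff_forall_isAcyclicRel d).2 fun O hO hac => h O hO hac d hd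

/-- `T_G` is the intersection of the irreducible ideals
`⟨x_i ^ (outdeg_O(i)+1) : i ∈ [n]⟩` over acyclic orientations `O` of `G`. -/
theorem stmt6 (n : ℕ) (G : SimpleGraph (Fin n)) (hG : G.Connected)
    (K : Type*) [Field K] :
    treeIdeal n G K =
      ⨅ O ∈ {O : Fin n → Fin n → Prop | IsOrientation G O ∧ IsAcyclicRel O},
        Ideal.span (Set.range fun i : Fin n =>
          (X i : MvPolynomial (Fin n) K) ^ (outDeg O i + 1)) :=
  stmt6_general n G K
end

section
/- Let n ≥ 1 and let T be a tree (a connected acyclic simple graph) on the vertex set {0,1,…,n}, regarded as rooted at 0, so that every vertex i ∈ {1,…,n} has a unique parent par(i), namely the neighbor of i on the unique path in T from i to 0. Then there exists a unique bijection p : {0,1,…,n} → {0,1,…,n} such that: (a) p(par(i)) < p(i) for every i ∈ {1,…,n} (in particular p(0) = 0); (b) whenever i, j ∈ {1,…,n} satisfy par(i) = par(j) and i < j, then p(i) > p(j); and (c) there is no pair i, j ∈ {1,…,n} with p(par(i)) < p(par(j)) < p(i) < p(j). (Condition (c) says that the planar arc diagram obtained by placing the vertices at positions p(v) on a line and joining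 each i to par(i) by an upper semicircular arc is non-crossing.) -/
/-!
Order the vertices by comparing their paths from the root lexicographically, entries compared
by `>`: this is the depth-first preorder that visits the children of each vertex in decreasing
order, and numbering the vertices along it gives (a), (b) and (c). Conversely every labelling
with (a)–(c) increases along this order: (a) makes labels increase down ancestor chains, (b)
orders siblings, and (c) puts the whole subtree of a sibling `x` before any later sibling `y`.
A bijection onto `{0, …, n}` that is monotone for a linear order is unique.
-/

open Function

namespace List.Lex

variable {α : Type*} {r : α → α → Prop}

theorem append_left_iff [Std.Irrefl r] (s : List α) {l m : List α} :
    Lex r (s ++ l) (s ++ m) ↔ Lex r l m := by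
  induction s with
  | nil => rfl
  | cons a s ih => rw [cons_append, cons_append, lex_cons_iff, ih]

theorem isPrefix_or_exists {l m : List α} (h : Lex r l m) :
    l <+: m ∨ ∃ pre a s b t, l = pre ++ a :: s ∧ m = pre ++ b :: t ∧ r a b := by
  induction h with
  | nil => exact Or.inl nil_prefix
  | @rel a l b m hab => exact Or.inr ⟨[], a, l, b, m, rfl, rfl, hab⟩
  | @cons a l m _ ih =>
    rcases ih with hlm | ⟨pre, a', s, b, t, rfl, rfl, hab⟩
    · exact Or.inl (cons_prefix_cons.2 ⟨rfl, hlm⟩)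
    · exact Or.inr ⟨a :: pre, a', s, b, t, rfl, rfl, hab⟩

/-- Such an `m` has the form `l ++ c :: _` with `r c x`. -/
theorem append_lex_concat [Std.Asymm r] {l m : List α} {x : α} (h₁ : Lex r l m)
    (h₂ : Lex r m (l ++ [x])) (t : List α) : Lex r (m ++ t) (l ++ [x]) := by
  rcases h₁.isPrefix_or_exists with ⟨_ | ⟨c, u⟩, rfl⟩ | ⟨pre, a, s, b, u, rfl, rfl, hab⟩
  · exact absurd (by simpa using h₁) (irrefl_of (Lex r) l)
  · rw [append_left_iff, cons_lex_cons_iff] at h₂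
    obtain hcx | ⟨-, hu⟩ := h₂
    · simpa using append_left r (rel (l₁ := u ++ t) (l₂ := []) hcx) l
    · exact absurd hu not_lex_nil
  · rw [append_assoc, cons_append, append_left_iff, cons_lex_cons_iff] at h₂
    obtain hba | ⟨rfl, -⟩ := h₂
    · exact absurd hab (_root_.asymm hba)
    · exact absurd hab (irrefl_of r b)

end List.Lex

theorem existsUnique_equiv_fin_lt_iff {V : Type*} [Fintype V] (s : V → V → Prop)
    [IsStrictTotalOrder V s] {k : ℕ} (hk : Fintype.card V = k) :
    ∃! e : V ≃ Fin k, ∀ u v, e u < e v ↔ s u v := by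
  classical
  let _ := linearOrderOfSTO s
  let e := (Fintype.orderIsoFinOfCardEq V hk).symm
  refine ⟨e.toEquiv, fun u v => e.lt_iff_lt, fun e' he' => ?_⟩
  have hmono : StrictMono e' := fun u v huv => (he' u v).2 huv
  exact Equiv.ext fun v => DFunLike.congr_fun
    (Subsingleton.elim (hmono.orderIsoOfSurjective e' e'.surjective) e) v

section RootPath

variable {V : Type*} [LinearOrder V] {r : V} {par : V → V} {d : V → ℕ}

def rootPath (hd : ∀ v, v ≠ r → d (par v) < d v) (v : V) : List V :=
  if hv : v = r then [r] else
    have := hd v hv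
    rootPath hd (par v) ++ [v]
termination_by d v

variable (hd : ∀ v, v ≠ r → d (par v) < d v)

theorem rootPath_root : rootPath hd r = [r] := by
  rw [rootPath, dif_pos rfl]

theorem rootPath_of_ne {v : V} (hv : v ≠ r) : rootPath hd v = rootPath hd (par v) ++ [v] := by
  rw [rootPath, dif_neg hv]

theorem rootPath_ne_nil (v : V) : rootPath hd v ≠ [] := by
  by_cases hv : v = r
  · simp [hv, rootPath_root]
  · simp [rootPath_of_ne hd hv]

theorem getLast?_rootPath (v : V) : (rootPath hd v).getLast? = some v := by
  by_cases hv : v = r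
  · simp [hv, rootPath_root]
  · simp [rootPath_of_ne hd hv]

theorem rootPath_injective : Injective (rootPath hd) := fun u v h => by
  simpa [getLast?_rootPath] using congrArg List.getLast? h

theorem eq_root_iff_of_rootPath_eq_concat {x : V} {l : List V} (h : rootPath hd x = l ++ [x]) :
    x = r ↔ l = [] := by
  constructor
  · rintro rfl
    simpa [rootPath_root] using h
  · rintro rfl
    by_contra hx
    exact rootPath_ne_nil hd (par x) (by simpa [rootPath_of_ne hd hx] using h)

theorem rootPath_par_of_rootPath_eq_concat {x : V} {l : List V} (hx : x ≠ r)
    (h : rootPath hd x = l ++ [x]) : rootPath hd (par x) = l :=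
  List.append_inj_left' ((rootPath_of_ne hd hx).symm.trans h) rfl

theorem rootPath_of_concat_isPrefix {v x : V} {l : List V} (h : l ++ [x] <+: rootPath hd v) :
    rootPath hd x = l ++ [x] := by
  by_cases hv : v = r
  · rw [hv, rootPath_root] at h
    obtain ⟨rfl, rfl⟩ : l = [] ∧ x = r := by
      simpa [List.append_eq_singleton_iff] using (List.prefix_concat_iff (l₂ := [])).1 h
    exact rootPath_root hd
  · rw [rootPath_of_ne hd hv, List.prefix_concat_iff] at h
    rcases h with h | h
    · obtain ⟨rfl, hxv⟩ := List.append_inj' h rfl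
      obtain rfl : x = v := by simpa using hxv
      exact rootPath_of_ne hd hv
    · exact rootPath_of_concat_isPrefix h
termination_by d v
decreasing_by exact hd v hv

theorem isPrefix_rootPath_par {u v : V} (h : rootPath hd u <+: rootPath hd v) (huv : u ≠ v) :
    v ≠ r ∧ rootPath hd u <+: rootPath hd (par v) := by
  by_cases hv : v = r
  · subst hv
    rw [rootPath_root, ← List.nil_append [v], List.prefix_concat_iff, List.prefix_nil,
      List.nil_append, ← rootPath_root hd] at h
    exact absurd h (by simp [(rootPath_injective hd).ne huv, rootPath_ne_nil])
  · rw [rootPath_of_ne hd hv, List.prefix_concat_iff, ← rootPath_of_ne hd hv] at h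
    exact ⟨hv, h.resolve_left (fun h => huv (rootPath_injective hd h))⟩

/-- The depth-first preorder from `r` that visits the children of each vertex in decreasing
order. -/
def RootPathLT (u v : V) : Prop :=
  List.Lex (· > ·) (rootPath hd u) (rootPath hd v)

instance : IsStrictTotalOrder V (RootPathLT hd) where
  trichotomous _ _ h₁ h₂ := rootPath_injective hd (Std.Trichotomous.trichotomous _ _ h₁ h₂)
  irrefl _ := irrefl_of (List.Lex (· > ·)) _
  trans _ _ _ := List.lex_trans fun h₁ h₂ => h₂.trans h₁

theorem rootPathLT_par {v : V} (hv : v ≠ r) : RootPathLT hd (par v) v := by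
  simpa [RootPathLT, rootPath_of_ne hd hv] using
    List.Lex.append_left _ (List.Lex.nil (a := v) (l := [])) (rootPath hd (par v))

theorem rootPathLT_of_sibling {i j : V} (hi : i ≠ r) (hj : j ≠ r) (hij : par i = par j)
    (hlt : i < j) : RootPathLT hd j i := by
  rw [RootPathLT, rootPath_of_ne hd hi, rootPath_of_ne hd hj, hij]
  exact List.Lex.append_left _ (List.Lex.rel (r := (· > ·)) hlt) _

theorem not_rootPathLT_of_crossing {i j : V} (hi : i ≠ r) (hj : j ≠ r)
    (h₁ : RootPathLT hd (par i) (par j)) (h₂ : RootPathLT hd (par j) i) :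
    ¬ RootPathLT hd i j := by
  rw [RootPathLT, rootPath_of_ne hd hi] at h₂ ⊢
  rw [rootPath_of_ne hd hj]
  exact asymm (h₁.append_lex_concat h₂ [j])

def IsNoncrossingLabelling (r : V) (par : V → V) {W : Type*} [LinearOrder W] (q : V → W) :
    Prop :=
  (∀ i, i ≠ r → q (par i) < q i) ∧
  (∀ i j, i ≠ r → j ≠ r → par i = par j → i < j → q j < q i) ∧
  ¬ ∃ i j, i ≠ r ∧ j ≠ r ∧ q (par i) < q (par j) ∧ q (par j) < q i ∧ q i < q j

variable {W : Type*} [LinearOrder W] {q : V → W}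

theorem le_of_rootPath_isPrefix (ha : ∀ i, i ≠ r → q (par i) < q i) {u v : V}
    (h : rootPath hd u <+: rootPath hd v) : q u ≤ q v := by
  by_cases huv : u = v
  · rw [huv]
  · obtain ⟨hv, h'⟩ := isPrefix_rootPath_par hd h huv
    exact (le_of_rootPath_isPrefix ha h').trans (ha v hv).le
termination_by d v
decreasing_by exact hd v hv

theorem lt_of_rootPath_isPrefix (ha : ∀ i, i ≠ r → q (par i) < q i) {u v : V}
    (h : rootPath hd u <+: rootPath hd v) (huv : u ≠ v) : q u < q v := by
  obtain ⟨hv, h'⟩ := isPrefix_rootPath_par hd h huv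
  exact (le_of_rootPath_isPrefix hd ha h').trans_lt (ha v hv)

/-- A descendant `u` of `x` with `q y < q u` would make the arcs `(par y, y)` and `(par u, u)`
cross. -/
theorem lt_of_rootPath_isPrefix_of_sibling (hq : Injective q)
    (ha : ∀ i, i ≠ r → q (par i) < q i)
    (hc : ¬ ∃ i j, i ≠ r ∧ j ≠ r ∧ q (par i) < q (par j) ∧ q (par j) < q i ∧ q i < q j)
    {x y u : V} (hx : x ≠ r) (hy : y ≠ r) (hxy : par x = par y) (hqxy : q x < q y)
    (h : rootPath hd x <+: rootPath hd u) : q u < q y := by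
  by_cases hux : u = x
  · rwa [hux]
  obtain ⟨hu, h'⟩ := isPrefix_rootPath_par hd h (Ne.symm hux)
  have hpar_lt : q (par u) < q y := lt_of_rootPath_isPrefix_of_sibling hq ha hc hx hy hxy hqxy h'
  have hpar_par : q (par y) < q (par u) :=
    hxy ▸ (ha x hx).trans_le (le_of_rootPath_isPrefix hd ha h')
  rcases lt_trichotomy (q u) (q y) with hlt | heq | hgt
  · exact hlt
  · rw [hq heq] at hpar_par
    exact absurd hpar_par (lt_irrefl _)
  · exact absurd ⟨y, u, hy, hu, hpar_par, hpar_lt, hgt⟩ hc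
termination_by d u
decreasing_by exact hd u hu

theorem IsNoncrossingLabelling.lt_of_rootPathLT (hq : Injective q)
    (hlab : IsNoncrossingLabelling r par q) {u v : V} (h : RootPathLT hd u v) : q u < q v := by
  obtain ⟨ha, hb, hc⟩ := hlab
  rcases h.isPrefix_or_exists with hpre | ⟨pre, x, s, y, t, hu, hv, hyx⟩
  · exact lt_of_rootPath_isPrefix hd ha hpre fun huv => irrefl_of (RootPathLT hd) u (huv ▸ h)
  have hPx : rootPath hd x = pre ++ [x] := rootPath_of_concat_isPrefix hd (by rw [hu]; simp)
  have hPy : rootPath hd y = pre ++ [y] := rootPath_of_concat_isPrefix hd (by rw [hv]; simp)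
  have hpre : pre ≠ [] := fun hnil =>
    hyx.ne' (((eq_root_iff_of_rootPath_eq_concat hd hPx).2 hnil).trans
      ((eq_root_iff_of_rootPath_eq_concat hd hPy).2 hnil).symm)
  have hx : x ≠ r := mt (eq_root_iff_of_rootPath_eq_concat hd hPx).1 hpre
  have hy : y ≠ r := mt (eq_root_iff_of_rootPath_eq_concat hd hPy).1 hpre
  have hxy : par x = par y := rootPath_injective hd <|
    (rootPath_par_of_rootPath_eq_concat hd hx hPx).trans
      (rootPath_par_of_rootPath_eq_concat hd hy hPy).symm
  calc q u < q y := lt_of_rootPath_isPrefix_of_sibling hd hq ha hc hx hy hxy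
        (hb y x hy hx hxy.symm hyx) (by rw [hu, hPx]; simp)
    _ ≤ q v := le_of_rootPath_isPrefix hd ha (by rw [hv, hPy]; simp)

theorem isNoncrossingLabelling_iff (hq : Injective q) :
    IsNoncrossingLabelling r par q ↔ ∀ u v, q u < q v ↔ RootPathLT hd u v := by
  constructor
  · intro hlab u v
    refine ⟨fun hlt => ?_, hlab.lt_of_rootPathLT hd hq⟩
    rcases trichotomous_of (RootPathLT hd) u v with h | rfl | h
    · exact h
    · exact absurd hlt (lt_irrefl _)
    · exact absurd hlt (hlab.lt_of_rootPathLT hd hq h).asymm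
  · intro hlt
    refine ⟨fun i hi => (hlt _ _).2 (rootPathLT_par hd hi),
      fun i j hi hj hij hij' => (hlt _ _).2 (rootPathLT_of_sibling hd hi hj hij hij'), ?_⟩
    rintro ⟨i, j, hi, hj, h₁, h₂, h₃⟩
    exact not_rootPathLT_of_crossing hd hi hj ((hlt _ _).1 h₁) ((hlt _ _).1 h₂) ((hlt _ _).1 h₃)

end RootPath

theorem stmt7_general (n : ℕ) (T : SimpleGraph (Fin (n + 1)))
    (par : Fin (n + 1) → Fin (n + 1))
    (hpar : ∀ i : Fin (n + 1), i ≠ 0 → T.Adj i (par i) ∧ T.dist (par i) 0 < T.dist i 0) :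
    ∃! p : Fin (n + 1) ≃ Fin (n + 1),
      (∀ i : Fin (n + 1), i ≠ 0 → p (par i) < p i) ∧
      (∀ i j : Fin (n + 1), i ≠ 0 → j ≠ 0 → par i = par j → i < j → p j < p i) ∧
      ¬ ∃ i j : Fin (n + 1), i ≠ 0 ∧ j ≠ 0 ∧
        p (par i) < p (par j) ∧ p (par j) < p i ∧ p i < p j := by
  let d (v : Fin (n + 1)) : ℕ := T.dist v 0
  have hd : ∀ i, i ≠ 0 → d (par i) < d i := fun i hi => (hpar i hi).2
  exact (existsUnique_congr fun p => isNoncrossingLabelling_iff hd p.injective).2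
    (existsUnique_equiv_fin_lt_iff (RootPathLT hd) (Fintype.card_fin _))

/-- for a tree `T` on `{0,1,…,n}` rooted at `0`, with parent function `par`
(the parent of `i ≠ 0` is the neighbor of `i` on the path towards `0`, i.e. the unique
neighbor of `i` strictly closer to `0`), there is a unique bijection
`p : {0,…,n} → {0,…,n}` such that (a) `p(par i) < p(i)` for every `i ≠ 0`;
(b) siblings `i < j` satisfy `p(i) > p(j)`; and (c) the induced arc diagram is
non-crossing, i.e. there is no pair `i, j ≠ 0` with
`p(par i) < p(par j) < p(i) < p(j)`. -/
theorem stmt7 (n : ℕ) (hn : 1 ≤ n) (T : SimpleGraph (Fin (n + 1))) (hT : T.IsTree)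
    (par : Fin (n + 1) → Fin (n + 1))
    (hpar : ∀ i : Fin (n + 1), i ≠ 0 → T.Adj i (par i) ∧ T.dist (par i) 0 < T.dist i 0) :
    ∃! p : Fin (n + 1) ≃ Fin (n + 1),
      (∀ i : Fin (n + 1), i ≠ 0 → p (par i) < p i) ∧
      (∀ i j : Fin (n + 1), i ≠ 0 → j ≠ 0 → par i = par j → i < j → p j < p i) ∧
      ¬ ∃ i j : Fin (n + 1), i ≠ 0 ∧ j ≠ 0 ∧
        p (par i) < p (par j) ∧ p (par j) < p i ∧ p i < p j :=
  stmt7_general n T par hpar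
end
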